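/- arXiv:2605.07964 — 5 statements merged into one kernel-verified Lean document; each statement's English description precedes it below -/
import Mathlib

section
/- Let X_1, X_2, ... be i.i.d. in [0,1] with mean μ* ∈ (0,1). Fix α ∈ (0,1), c ∈ (0,1), and for each candidate μ ∈ (0,1) a predictable sequence λ_i(μ) with values in [-c/(1-μ), c/μ]. Define W_n(μ) = ∏_{i=1}^n (1 + λ_i(μ)(X_i - μ)) and C_{α,n} = {μ ∈ (0,1) : W_n(μ) ≤ 1/α}. Then P(μ* ∈ C_{α,n} for all n ≥ 1) ≥ 1 - α. -/
/-!
At the true mean `μ*`, each factor `1 + λᵢ(Xᵢ - μ*)` is nonnegative (the constraint on `λᵢ`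
and `c < 1`) and has conditional mean one given the past (independence and predictability of
`λᵢ`), so the wealth `Wₙ(μ*)` is a nonnegative martingale of mean one. Ville's inequality,
obtained from Doob's maximal inequality by letting the horizon tend to infinity, bounds the
probability that it ever reaches `1/α` by `α`; outside that event `μ*` lies in every `C_{α,n}`.
-/

open MeasureTheory ProbabilityTheory Finset

namespace MeasureTheory

variable {Ω : Type*} {m0 : MeasurableSpace Ω} {P : Measure Ω}

theorem Martingale.ville_ineq [IsFiniteMeasure P] {ℱ : Filtration ℕ m0} {M : ℕ → Ω → ℝ}
    (hM : Martingale M ℱ P) (hnonneg : 0 ≤ M) {ε : ℝ} (hε : 0 < ε) :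
    P {ω | ∃ n, ε ≤ M n ω} ≤ ENNReal.ofReal ((∫ ω, M 0 ω ∂P) / ε) := by
  set A : ℕ → Set Ω := fun n =>
    {ω | (ε.toNNReal : ℝ) ≤ (range (n + 1)).sup' nonempty_range_add_one fun k => M k ω}
  have hA : {ω | ∃ n, ε ≤ M n ω} = ⋃ n, A n := by
    ext ω
    simp only [A, Real.coe_toNNReal _ hε.le, Set.mem_ofPred_eq, Set.mem_iUnion, le_sup'_iff,
      mem_range]
    exact ⟨fun ⟨n, hn⟩ => ⟨n, n, n.lt_succ_self, hn⟩, fun ⟨_, k, _, hk⟩ => ⟨k, hk⟩⟩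
  have hA_mono : Monotone A := by
    intro n m hnm ω hω
    simp only [A, Set.mem_ofPred_eq] at hω ⊢
    exact le_trans hω (sup'_mono _ (range_subset_range.mpr (by omega)) _)
  have hA_le : ∀ n, ENNReal.ofReal ε * P (A n) ≤ ENNReal.ofReal (∫ ω, M 0 ω ∂P) := fun n =>
    calc ENNReal.ofReal ε * P (A n)
        ≤ ENNReal.ofReal (∫ ω in A n, M n ω ∂P) := maximal_ineq hM.submartingale hnonneg n
      _ ≤ ENNReal.ofReal (∫ ω, M n ω ∂P) := ENNReal.ofReal_le_ofReal
          (setIntegral_le_integral (hM.integrable n) (ae_of_all _ (hnonneg n)))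
      _ = ENNReal.ofReal (∫ ω, M 0 ω ∂P) := by
          simpa using congrArg ENNReal.ofReal
            (hM.setIntegral_eq (Nat.zero_le n) MeasurableSet.univ).symm
  rw [ENNReal.ofReal_div_of_pos hε, ENNReal.le_div_iff_mul_le (by simp [hε]) (by simp), mul_comm,
    hA, hA_mono.measure_iUnion, ENNReal.mul_iSup]
  exact iSup_le hA_le

theorem ofReal_one_sub_le_of_measure_compl_le [IsProbabilityMeasure P] {s : Set Ω} {α : ℝ}
    (hα : 0 ≤ α) (hs : P sᶜ ≤ ENNReal.ofReal α) : ENNReal.ofReal (1 - α) ≤ P s := by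
  rw [ENNReal.ofReal_sub _ hα, ENNReal.ofReal_one, tsub_le_iff_right]
  calc 1 = P (s ∪ sᶜ) := by simp
    _ ≤ P s + P sᶜ := measure_union_le s sᶜ
    _ ≤ P s + ENNReal.ofReal α := by gcongr

theorem martingale_prod_of_condExp_ae_eq_one [IsFiniteMeasure P] {ℱ : Filtration ℕ m0}
    {F : ℕ → Ω → ℝ} (hF : StronglyAdapted ℱ F) (hbdd : ∀ i, ∃ C, ∀ ω, |F i ω| ≤ C)
    (hcond : ∀ n, P[F (n + 1) | ℱ n] =ᵐ[P] 1) :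
    Martingale (fun n ω => ∏ i ∈ range (n + 1), F i ω) ℱ P := by
  choose C hC using hbdd
  have hF_int : ∀ i, Integrable (F i) P := fun i =>
    .of_bound ((hF i).mono (ℱ.le i)).aestronglyMeasurable (C i) (ae_of_all _ (hC i))
  have hM : StronglyAdapted ℱ fun n ω => ∏ i ∈ range (n + 1), F i ω := fun n =>
    Finset.stronglyMeasurable_fun_prod _ fun i hi =>
      (hF i).mono (ℱ.mono (Nat.lt_succ_iff.mp (mem_range.mp hi)))
  have hM_int : ∀ n, Integrable (fun ω => ∏ i ∈ range (n + 1), F i ω) P := fun n =>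
    .of_bound ((hM n).mono (ℱ.le n)).aestronglyMeasurable (∏ i ∈ range (n + 1), C i)
      (ae_of_all _ fun ω => by
        rw [Real.norm_eq_abs, abs_prod]
        exact prod_le_prod (fun _ _ => abs_nonneg _) fun i _ => hC i ω)
  refine martingale_nat hM hM_int fun n => ?_
  have hsucc : (fun ω => ∏ i ∈ range (n + 1 + 1), F i ω)
      = (fun ω => ∏ i ∈ range (n + 1), F i ω) * F (n + 1) := by
    funext ω; exact prod_range_succ _ _
  rw [hsucc]
  filter_upwards [condExp_mul_of_stronglyMeasurable_left (hM n) (hsucc ▸ hM_int (n + 1))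
    (hF_int (n + 1)), hcond n] with ω hprod hone
  rw [hprod, Pi.mul_apply, hone, Pi.one_apply, mul_one]

theorem condExp_one_add_mul_sub_ae_eq_one [IsFiniteMeasure P] {m : MeasurableSpace Ω}
    (hm : m ≤ m0) {l Y : Ω → ℝ} {μ L : ℝ} (hl : StronglyMeasurable[m] l) (hlL : ∀ ω, |l ω| ≤ L)
    (hY : Integrable Y P) (hcond : P[Y | m] =ᵐ[P] fun _ => μ) :
    P[fun ω => 1 + l ω * (Y ω - μ) | m] =ᵐ[P] 1 := by
  have hlY : Integrable (fun ω => l ω * (Y ω - μ)) P :=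
    (hY.sub (integrable_const μ)).bdd_mul (hl.mono hm).aestronglyMeasurable (ae_of_all _ hlL)
  have hsub : P[fun ω => Y ω - μ | m] =ᵐ[P] P[Y | m] - P[fun _ => μ | m] :=
    condExp_sub hY (integrable_const μ) m
  have hadd : P[fun ω => 1 + l ω * (Y ω - μ) | m]
      =ᵐ[P] P[fun _ => 1 | m] + P[fun ω => l ω * (Y ω - μ) | m] :=
    condExp_add (integrable_const 1) hlY m
  have hmul : P[fun ω => l ω * (Y ω - μ) | m] =ᵐ[P] l * P[fun ω => Y ω - μ | m] :=
    condExp_mul_of_stronglyMeasurable_left hl hlY (hY.sub (integrable_const μ))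
  filter_upwards [hadd, hmul, hsub, hcond] with ω hadd hmul hsub hcond
  simp [hadd, hmul, hsub, hcond, condExp_const hm]

end MeasureTheory

section Betting

variable {Ω : Type*} {m0 : MeasurableSpace Ω} {P : Measure Ω}

def bettingWealth (l X : ℕ → Ω → ℝ) (μ : ℝ) (n : ℕ) (ω : Ω) : ℝ :=
  ∏ i ∈ range n, (1 + l i ω * (X i ω - μ))

theorem neg_le_mul_sub_of_mem_Icc {μ c l x : ℝ} (hμ : μ ∈ Set.Ioo 0 1)
    (hl : l ∈ Set.Icc (-c / (1 - μ)) (c / μ)) (hx : x ∈ Set.Icc 0 1) : -c ≤ l * (x - μ) := by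
  obtain ⟨hμ0, hμ1⟩ := hμ
  have hlo : -c ≤ l * (1 - μ) := (div_le_iff₀ (sub_pos.mpr hμ1)).mp hl.1
  have hhi : l * μ ≤ c := (le_div_iff₀ hμ0).mp hl.2
  -- `l * (x - μ)` is affine in `x`, so it suffices to check the endpoints `x = 0` and `x = 1`.
  nlinarith [mul_le_mul_of_nonneg_left hlo hx.1,
    mul_le_mul_of_nonneg_left hhi (sub_nonneg.mpr hx.2)]

theorem bettingWealth_nonneg {l X : ℕ → Ω → ℝ} {μ c : ℝ} (hμ : μ ∈ Set.Ioo 0 1) (hc : c ≤ 1)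
    (hl : ∀ i ω, l i ω ∈ Set.Icc (-c / (1 - μ)) (c / μ)) (hX : ∀ i ω, X i ω ∈ Set.Icc 0 1)
    (n : ℕ) (ω : Ω) : 0 ≤ bettingWealth l X μ n ω :=
  prod_nonneg fun i _ => by linarith [neg_le_mul_sub_of_mem_Icc hμ (hl i ω) (hX i ω)]

theorem martingale_bettingWealth_succ [IsFiniteMeasure P] {ℱ : Filtration ℕ m0}
    {l X : ℕ → Ω → ℝ} {μ L : ℝ} (hX : StronglyAdapted ℱ X) (hX01 : ∀ i ω, X i ω ∈ Set.Icc 0 1)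
    (hμ : μ ∈ Set.Icc 0 1) (hl0 : StronglyMeasurable[ℱ 0] (l 0))
    (hl : ∀ n, StronglyMeasurable[ℱ n] (l (n + 1))) (hlL : ∀ i ω, |l i ω| ≤ L)
    (hcond : ∀ n, P[X (n + 1) | ℱ n] =ᵐ[P] fun _ => μ) :
    Martingale (fun n => bettingWealth l X μ (n + 1)) ℱ P := by
  have hl_adapted : StronglyAdapted ℱ l
    | 0 => hl0
    | n + 1 => (hl n).mono (ℱ.mono n.le_succ)
  refine martingale_prod_of_condExp_ae_eq_one (fun i => ?_) (fun i => ⟨1 + L, fun ω => ?_⟩)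
    fun n => ?_
  · exact stronglyMeasurable_const.add ((hl_adapted i).mul ((hX i).sub stronglyMeasurable_const))
  · have hdev : |X i ω - μ| ≤ 1 :=
      abs_sub_le_of_nonneg_of_le (hX01 i ω).1 (hX01 i ω).2 hμ.1 hμ.2
    calc |1 + l i ω * (X i ω - μ)| ≤ 1 + |l i ω| * |X i ω - μ| := by
          simpa [abs_mul] using abs_add_le 1 (l i ω * (X i ω - μ))
      _ ≤ 1 + L := by nlinarith [abs_nonneg (l i ω), hlL i ω]
  · exact condExp_one_add_mul_sub_ae_eq_one (ℱ.le n) (hl n) (hlL (n + 1))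
      (.of_mem_Icc 0 1 ((hX _).mono (ℱ.le _)).measurable.aemeasurable (ae_of_all _ (hX01 _)))
      (hcond n)

theorem integral_bettingWealth_one [IsProbabilityMeasure P] {l X : ℕ → Ω → ℝ} {μ a : ℝ}
    (hl0 : l 0 = fun _ => a) (hX : Integrable (X 0) P) (hmean : ∫ ω, X 0 ω ∂P = μ) :
    ∫ ω, bettingWealth l X μ 1 ω ∂P = 1 := by
  have hbet : Integrable (fun ω => a * (X 0 ω - μ)) P :=
    (hX.sub (integrable_const μ)).const_mul a
  simp only [bettingWealth, range_one, prod_singleton, hl0]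
  rw [integral_add (integrable_const 1) hbet, integral_const_mul,
    integral_sub hX (integrable_const μ), hmean]
  simp

end Betting

theorem betting_confidence_sequence_coverage_general
    {Ω : Type*} {m0 : MeasurableSpace Ω} (P : Measure Ω) [IsProbabilityMeasure P]
    (X : ℕ → Ω → ℝ) (hX_sm : ∀ i, StronglyMeasurable (X i))
    (hX01 : ∀ i ω, X i ω ∈ Set.Icc (0:ℝ) 1)
    (hindep : iIndepFun (m := fun _ => Real.measurableSpace) X P)
    (μstar : ℝ) (hμstar : μstar ∈ Set.Ioo (0:ℝ) 1) (hmean : ∀ i, ∫ ω, X i ω ∂P = μstar)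
    (α c : ℝ) (hα : α ∈ Set.Ioo (0:ℝ) 1) (hc : c ∈ Set.Ioo (0:ℝ) 1)
    (ℱ : Filtration ℕ m0) (hℱ : ℱ = Filtration.natural X hX_sm)
    (lam : ℝ → ℕ → Ω → ℝ)
    (hlam_bdd : ∀ μ ∈ Set.Ioo (0:ℝ) 1, ∀ i ω,
      lam μ i ω ∈ Set.Icc (-c / (1 - μ)) (c / μ))
    (hlam0 : ∀ μ ∈ Set.Ioo (0:ℝ) 1, ∃ cst : ℝ, lam μ 0 = fun _ => cst)
    (hlam_pred : ∀ μ ∈ Set.Ioo (0:ℝ) 1, ∀ i, StronglyMeasurable[ℱ i] (lam μ (i + 1)))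
    (W : ℝ → ℕ → Ω → ℝ)
    (hW : ∀ μ n ω, W μ n ω = ∏ i ∈ Finset.range n, (1 + lam μ i ω * (X i ω - μ)))
    (C : ℕ → Ω → Set ℝ)
    (hC : ∀ n ω, C n ω = {μ ∈ Set.Ioo (0:ℝ) 1 | W μ n ω ≤ 1 / α}) :
    ENNReal.ofReal (1 - α) ≤ P {ω | ∀ n, 1 ≤ n → μstar ∈ C n ω} := by
  subst hℱ
  obtain ⟨a, ha⟩ := hlam0 μstar hμstar
  have hmart := martingale_bettingWealth_succ (Filtration.stronglyAdapted_natural hX_sm)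
    hX01 (Set.Ioo_subset_Icc_self hμstar) (by rw [ha]; exact stronglyMeasurable_const)
    (hlam_pred μstar hμstar)
    (fun i ω => abs_le_max_abs_abs (hlam_bdd μstar hμstar i ω).1 (hlam_bdd μstar hμstar i ω).2)
    fun n => hmean (n + 1) ▸ hindep.condExp_natural_ae_eq_of_lt hX_sm n.lt_succ_self
  have hbad : {ω | ∀ n, 1 ≤ n → μstar ∈ C n ω}ᶜ
      ⊆ {ω | ∃ n, 1 / α ≤ bettingWealth (lam μstar) X μstar (n + 1) ω} := by
    intro ω hω
    simp only [Set.mem_compl_iff, Set.mem_ofPred_eq, not_forall, hC, not_and, not_le] at hω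
    obtain ⟨n, hn, hW_gt⟩ := hω
    obtain ⟨k, rfl⟩ := Nat.exists_eq_add_of_le' hn
    exact ⟨k, (hW μstar (k + 1) ω ▸ hW_gt hμstar).le⟩
  refine ofReal_one_sub_le_of_measure_compl_le hα.1.le ((measure_mono hbad).trans ?_)
  have hX0 : Integrable (X 0) P :=
    .of_mem_Icc 0 1 (hX_sm 0).measurable.aemeasurable (ae_of_all _ (hX01 0))
  simpa [integral_bettingWealth_one ha hX0 (hmean 0)] using
    hmart.ville_ineq (fun _ => bettingWealth_nonneg hμstar hc.2.le (hlam_bdd μstar hμstar) hX01 _)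
      (one_div_pos.mpr hα.1)

/-- Anytime-valid coverage of betting confidence sequences: with X₀, X₁, ... i.i.d. in
[0,1] with mean μ* ∈ (0,1), α, c ∈ (0,1), and for each candidate μ ∈ (0,1) a predictable
sequence λᵢ(μ) ∈ [-c/(1-μ), c/μ], define `Wₙ(μ) = ∏_{i<n} (1 + λᵢ(μ)(Xᵢ − μ))` and
`C_{α,n} = {μ ∈ (0,1) : Wₙ(μ) ≤ 1/α}`. Then `P(μ* ∈ C_{α,n} for all n ≥ 1) ≥ 1 − α`. -/
theorem betting_confidence_sequence_coverage
    {Ω : Type*} {m0 : MeasurableSpace Ω} (P : Measure Ω) [IsProbabilityMeasure P]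
    (X : ℕ → Ω → ℝ) (hX_sm : ∀ i, StronglyMeasurable (X i))
    (hX01 : ∀ i ω, X i ω ∈ Set.Icc (0:ℝ) 1)
    (hindep : iIndepFun (m := fun _ => Real.measurableSpace) X P)
    (hident : ∀ i, IdentDistrib (X i) (X 0) P P)
    (μstar : ℝ) (hμstar : μstar ∈ Set.Ioo (0:ℝ) 1) (hmean : ∀ i, ∫ ω, X i ω ∂P = μstar)
    (α c : ℝ) (hα : α ∈ Set.Ioo (0:ℝ) 1) (hc : c ∈ Set.Ioo (0:ℝ) 1)
    (ℱ : Filtration ℕ m0) (hℱ : ℱ = Filtration.natural X hX_sm)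
    (lam : ℝ → ℕ → Ω → ℝ)
    (hlam_bdd : ∀ μ ∈ Set.Ioo (0:ℝ) 1, ∀ i ω,
      lam μ i ω ∈ Set.Icc (-c / (1 - μ)) (c / μ))
    (hlam0 : ∀ μ ∈ Set.Ioo (0:ℝ) 1, ∃ cst : ℝ, lam μ 0 = fun _ => cst)
    (hlam_pred : ∀ μ ∈ Set.Ioo (0:ℝ) 1, ∀ i, StronglyMeasurable[ℱ i] (lam μ (i + 1)))
    (W : ℝ → ℕ → Ω → ℝ)
    (hW : ∀ μ n ω, W μ n ω = ∏ i ∈ Finset.range n, (1 + lam μ i ω * (X i ω - μ)))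
    (C : ℕ → Ω → Set ℝ)
    (hC : ∀ n ω, C n ω = {μ ∈ Set.Ioo (0:ℝ) 1 | W μ n ω ≤ 1 / α}) :
    ENNReal.ofReal (1 - α) ≤ P {ω | ∀ n, 1 ≤ n → μstar ∈ C n ω} :=
  betting_confidence_sequence_coverage_general P X hX_sm hX01 hindep μstar hμstar hmean α c hα hc ℱ
    hℱ lam hlam_bdd hlam0 hlam_pred W hW C hC
end

section
/- Let X_1, X_2, ... be i.i.d. in [0,1] with law P*, fix μ ∈ (0,1), c ∈ (0,1), and let λ_i be predictable coefficients in I_{μ,c} chosen by maximising the predictive expected log-growth with respect to predictive distributions Q_{i|i-1}. With λ* the maximiser of M(λ) = E_{P*}[log(1+λ(X-μ))] on I_{μ,c} and W_n = ∏_{i=1}^n (1+λ_i(X_i-μ)), one has M(λ*) − (1/n) E[log W_n] ≤ 2 L_{μ,c} · (1/n) ∑_{i=1}^n E[W_1(Q_{i|i-1}, P*)], where L_{μ,c} = c/((1-c)·min(μ,1-μ)). -/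
/-!
Since `λᵢ` is predictable and `Xᵢ` is independent of the past with law `P*`, the `i`-th log factor
has expectation `E[M(λᵢ)]`, so `E[log Wₙ] = ∑ᵢ E[M(λᵢ)]`. For `λ ∈ I_{μ,c}` the factor
`1 + λ(x − μ)` stays above `1 − c` on `[0,1]`, so `x ↦ log(1 + λ(x − μ))` is `L_{μ,c}`-Lipschitz
there; by Kantorovich–Rubinstein, `M` and the predictive growth `M_{Qᵢ}` differ by at most
`L_{μ,c} W₁(Qᵢ, P*)` on `I_{μ,c}`. As `λᵢ` maximises `M_{Qᵢ}`, this gives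
`M(λ*) − M(λᵢ) ≤ 2 L_{μ,c} W₁(Qᵢ, P*)`; take expectations and average over `i`.
-/

open MeasureTheory ProbabilityTheory

/-- Wasserstein-1 distance between probability measures on ℝ, via the
Kantorovich–Rubinstein dual formulation. -/
noncomputable def W1 (P Q : Measure ℝ) : ℝ :=
  sSup {d : ℝ | ∃ f : ℝ → ℝ, LipschitzWith 1 f ∧ d = (∫ x, f x ∂P) - ∫ x, f x ∂Q}

open Set

namespace PredictiveRegret

theorem abs_log_sub_log_le {a u v : ℝ} (ha : 0 < a) (hu : a ≤ u) (hv : a ≤ v) :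
    |Real.log u - Real.log v| ≤ |u - v| / a := by
  wlog huv : v ≤ u generalizing u v
  · rw [abs_sub_comm, abs_sub_comm u]
    exact this hv hu (le_of_not_ge huv)
  have hu0 : 0 < u := ha.trans_le hu
  have hv0 : 0 < v := ha.trans_le hv
  rw [abs_of_nonneg (sub_nonneg.2 (Real.log_le_log hv0 huv)), abs_of_nonneg (sub_nonneg.2 huv),
    ← Real.log_div hu0.ne' hv0.ne']
  calc Real.log (u / v) ≤ u / v - 1 := Real.log_le_sub_one_of_pos (div_pos hu0 hv0)
    _ = (u - v) / v := by field_simp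
    _ ≤ (u - v) / a := div_le_div_of_nonneg_left (sub_nonneg.2 huv) ha hv

theorem sub_le_two_mul_of_isMaxOn {α : Type*} {S : Set α} {F G : α → ℝ} {δ : ℝ} {a b : α}
    (hFG : ∀ l ∈ S, |F l - G l| ≤ δ) (hmax : IsMaxOn F S a) (ha : a ∈ S) (hb : b ∈ S) :
    G b - G a ≤ 2 * δ := by
  have hab : F b ≤ F a := hmax hb
  linarith [abs_le.1 (hFG a ha), abs_le.1 (hFG b hb)]

theorem sub_one_div_mul_sum_le {n : ℕ} (hn : 1 ≤ n) {m K : ℝ} {a b : ℕ → ℝ}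
    (h : ∀ i, m - a i ≤ K * b i) :
    m - (1 / n) * ∑ i ∈ Finset.range n, a i ≤ K * ((1 / n) * ∑ i ∈ Finset.range n, b i) := by
  have hn0 : (0 : ℝ) < n := by exact_mod_cast hn
  calc m - (1 / n) * ∑ i ∈ Finset.range n, a i
      = (1 / n) * ∑ i ∈ Finset.range n, (m - a i) := by
        rw [Finset.sum_sub_distrib, Finset.sum_const, Finset.card_range, nsmul_eq_mul]
        field_simp
    _ ≤ (1 / n) * ∑ i ∈ Finset.range n, K * b i := by gcongr with i; exact h i
    _ = K * ((1 / n) * ∑ i ∈ Finset.range n, b i) := by rw [← Finset.mul_sum]; ring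

/-- The interval `I_{μ,c}` of admissible betting coefficients. -/
def betInterval (μ c : ℝ) : Set ℝ := Icc (-c / (1 - μ)) (c / μ)

/-- The constant `L_{μ,c}`. -/
noncomputable def lipConst (μ c : ℝ) : ℝ := c / ((1 - c) * min μ (1 - μ))

/-- `M_ν(λ)`, the expected log-growth of the bet `λ` under `ν`. -/
noncomputable def expLogGrowth (ν : Measure ℝ) (μ l : ℝ) : ℝ := ∫ x, Real.log (1 + l * (x - μ)) ∂ν

section BetInterval

variable {μ c l x : ℝ}

theorem lipConst_pos (hμ : μ ∈ Ioo 0 1) (hc : c ∈ Ioo 0 1) : 0 < lipConst μ c := by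
  have := hμ.2; have := hc.2
  exact div_pos hc.1 (mul_pos (by linarith) (lt_min hμ.1 (by linarith)))

theorem abs_le_of_mem_betInterval (hμ : μ ∈ Ioo 0 1) (hc : 0 ≤ c) (hl : l ∈ betInterval μ c) :
    |l| ≤ c / min μ (1 - μ) := by
  have hm : 0 < min μ (1 - μ) := lt_min hμ.1 (sub_pos.2 hμ.2)
  refine abs_le.2 ⟨?_, hl.2.trans (by gcongr; exact min_le_left _ _)⟩
  calc -(c / min μ (1 - μ)) ≤ -c / (1 - μ) := by
        rw [neg_div]; gcongr; exact min_le_right _ _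
    _ ≤ l := hl.1

theorem neg_le_mul_sub_of_mem_betInterval (hμ : μ ∈ Ioo 0 1) (hl : l ∈ betInterval μ c)
    (hx : x ∈ Icc (0 : ℝ) 1) : -c ≤ l * (x - μ) := by
  have h1 : l * μ ≤ c := (le_div_iff₀ hμ.1).1 hl.2
  have h2 : -c ≤ l * (1 - μ) := (div_le_iff₀ (sub_pos.2 hμ.2)).1 hl.1
  rcases le_total 0 l with h | h
  · nlinarith [mul_nonneg h hx.1]
  · nlinarith [mul_nonpos_of_nonpos_of_nonneg h (sub_nonneg.2 hx.2)]

theorem lipschitzOnWith_log_one_add_mul (hμ : μ ∈ Ioo 0 1) (hc : c ∈ Ioo 0 1)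
    (hl : l ∈ betInterval μ c) :
    LipschitzOnWith (lipConst μ c).toNNReal (fun x => Real.log (1 + l * (x - μ))) (Icc 0 1) := by
  refine LipschitzOnWith.of_dist_le' fun x hx y hy => ?_
  have h1c : 0 < 1 - c := sub_pos.2 hc.2
  have hm : 0 < min μ (1 - μ) := lt_min hμ.1 (sub_pos.2 hμ.2)
  rw [Real.dist_eq, Real.dist_eq]
  calc |Real.log (1 + l * (x - μ)) - Real.log (1 + l * (y - μ))|
      ≤ |(1 + l * (x - μ)) - (1 + l * (y - μ))| / (1 - c) :=
        abs_log_sub_log_le h1c (by linarith [neg_le_mul_sub_of_mem_betInterval hμ hl hx])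
          (by linarith [neg_le_mul_sub_of_mem_betInterval hμ hl hy])
    _ = |l| * |x - y| / (1 - c) := by rw [← abs_mul]; ring_nf
    _ ≤ c / min μ (1 - μ) * |x - y| / (1 - c) := by
        gcongr; exact abs_le_of_mem_betInterval hμ hc.1.le hl
    _ = lipConst μ c * |x - y| := by unfold lipConst; field_simp

theorem abs_log_one_add_mul_le (hμ : μ ∈ Ioo 0 1) (hc : c ∈ Ioo 0 1) (hl : l ∈ betInterval μ c)
    (hx : x ∈ Icc (0 : ℝ) 1) : |Real.log (1 + l * (x - μ))| ≤ lipConst μ c := by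
  have h := (lipschitzOnWith_log_one_add_mul hμ hc hl).dist_le_mul x hx μ (Ioo_subset_Icc_self hμ)
  rw [Real.coe_toNNReal _ (lipConst_pos hμ hc).le, Real.dist_eq, Real.dist_eq] at h
  simp only [sub_self, mul_zero, add_zero, Real.log_one, sub_zero] at h
  have hxμ : |x - μ| ≤ 1 := abs_le.2 ⟨by linarith [hx.1, hμ.2], by linarith [hx.2, hμ.1]⟩
  nlinarith [lipConst_pos hμ hc]

end BetInterval

section UnitInterval

variable {ρ σ : Measure ℝ}

theorem ae_mem_Icc (hρ : ρ (Icc 0 1)ᶜ = 0) : ∀ᵐ x ∂ρ, x ∈ Icc (0 : ℝ) 1 :=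
  mem_ae_iff.2 hρ

theorem integrable_of_continuousOn [IsFiniteMeasure ρ] (hρ : ρ (Icc 0 1)ᶜ = 0) {f : ℝ → ℝ}
    (hf : ContinuousOn f (Icc 0 1)) : Integrable f ρ := by
  have h := hf.integrableOn_compact (μ := ρ) isCompact_Icc
  rwa [IntegrableOn, Measure.restrict_eq_self_of_ae_mem (ae_mem_Icc hρ)] at h

theorem abs_integral_sub_integral_le [IsProbabilityMeasure ρ] (hρ : ρ (Icc 0 1)ᶜ = 0)
    {f g : ℝ → ℝ} (hf : Integrable f ρ) (hg : Integrable g ρ) {ε : ℝ}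
    (hfg : ∀ x ∈ Icc (0 : ℝ) 1, |f x - g x| ≤ ε) :
    |∫ x, f x ∂ρ - ∫ x, g x ∂ρ| ≤ ε := by
  rw [← integral_sub hf hg]
  simpa using norm_integral_le_of_norm_le_const (f := fun x => f x - g x) ((ae_mem_Icc hρ).mono hfg)

variable [IsProbabilityMeasure ρ] [IsProbabilityMeasure σ]
  (hρ : ρ (Icc 0 1)ᶜ = 0) (hσ : σ (Icc 0 1)ᶜ = 0)
include hρ hσ

theorem integral_sub_integral_le_two {f : ℝ → ℝ} (hf : LipschitzWith 1 f) :
    ∫ x, f x ∂ρ - ∫ x, f x ∂σ ≤ 2 := by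
  have near_f0 : ∀ ν : Measure ℝ, [IsProbabilityMeasure ν] → ν (Icc 0 1)ᶜ = 0 →
      |∫ x, f x ∂ν - ∫ _, f 0 ∂ν| ≤ 1 := fun ν _ hν =>
    abs_integral_sub_integral_le hν (integrable_of_continuousOn hν hf.continuous.continuousOn)
      (integrable_const _) fun x hx => by
        have h := hf.dist_le_mul x 0
        rw [Real.dist_eq, Real.dist_eq, sub_zero, abs_of_nonneg hx.1, NNReal.coe_one, one_mul] at h
        exact h.trans hx.2
  have h1 := abs_le.1 (near_f0 ρ hρ)
  have h2 := abs_le.1 (near_f0 σ hσ)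
  simp only [integral_const, probReal_univ, one_smul] at h1 h2
  linarith

theorem le_W1 {f : ℝ → ℝ} (hf : LipschitzWith 1 f) : ∫ x, f x ∂ρ - ∫ x, f x ∂σ ≤ W1 ρ σ :=
  le_csSup ⟨2, by rintro _ ⟨g, hg, rfl⟩; exact integral_sub_integral_le_two hρ hσ hg⟩ ⟨f, hf, rfl⟩

theorem W1_nonneg : 0 ≤ W1 ρ σ := by
  simpa using le_W1 hρ hσ (LipschitzWith.const' (0 : ℝ))

theorem W1_le_two : W1 ρ σ ≤ 2 :=
  csSup_le ⟨_, 0, LipschitzWith.const' 0, rfl⟩ fun _ ⟨_, hg, hd⟩ =>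
    hd ▸ integral_sub_integral_le_two hρ hσ hg

theorem abs_integral_sub_integral_le_W1 {f : ℝ → ℝ} (hf : LipschitzWith 1 f) :
    |∫ x, f x ∂ρ - ∫ x, f x ∂σ| ≤ W1 ρ σ := by
  have h := le_W1 hρ hσ hf.neg
  simp only [Pi.neg_apply, integral_neg] at h
  exact abs_le.2 ⟨by linarith, le_W1 hρ hσ hf⟩

theorem abs_integral_sub_integral_le_mul_W1 {K : NNReal} {f : ℝ → ℝ}
    (hf : LipschitzOnWith K f (Icc 0 1)) :
    |∫ x, f x ∂ρ - ∫ x, f x ∂σ| ≤ K * W1 ρ σ := by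
  set g : ℝ → ℝ := fun x => f (projIcc 0 1 zero_le_one x)
  have hg : LipschitzWith K g :=
    (hf.to_restrict.comp (LipschitzWith.projIcc zero_le_one)).weaken (by simp)
  have hfg : ∀ ν : Measure ℝ, ν (Icc 0 1)ᶜ = 0 → ∫ x, f x ∂ν = ∫ x, g x ∂ν := fun ν hν =>
    integral_congr_ae ((ae_mem_Icc hν).mono fun x hx => by simp [g, projIcc_of_mem _ hx])
  rw [hfg ρ hρ, hfg σ hσ]
  rcases eq_or_ne K 0 with rfl | hK
  · have hconst : g = fun _ => g 0 :=
      funext fun x => dist_le_zero.1 (by simpa using hg.dist_le_mul x 0)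
    rw [hconst]
    simp
  · have hK0 : (0 : ℝ) < K := by positivity
    have hg1 : LipschitzWith 1 fun x => (K : ℝ)⁻¹ * g x := by
      refine LipschitzWith.of_dist_le_mul fun x y => ?_
      rw [Real.dist_eq, ← mul_sub, abs_mul, abs_of_pos (inv_pos.2 hK0), NNReal.coe_one, one_mul,
        inv_mul_le_iff₀ hK0, ← Real.dist_eq]
      exact hg.dist_le_mul x y
    have h := abs_integral_sub_integral_le_W1 hρ hσ hg1
    rw [integral_const_mul, integral_const_mul, ← mul_sub, abs_mul, abs_of_pos (inv_pos.2 hK0),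
      inv_mul_le_iff₀ hK0] at h
    exact h

end UnitInterval

section Measurability

theorem exists_seq_lipschitzWith_dense :
    ∃ u : ℕ → ℝ → ℝ, (∀ n, LipschitzWith 1 (u n)) ∧ ∀ f : ℝ → ℝ, LipschitzWith 1 f →
      ∀ ε > 0, ∃ n, ∀ x ∈ Icc (0 : ℝ) 1, |f x - u n x| < ε := by
  have : Nonempty {g : C(Icc (0 : ℝ) 1, ℝ) // LipschitzWith 1 g} :=
    ⟨⟨0, LipschitzWith.const' 0⟩⟩
  obtain ⟨v, hv⟩ := TopologicalSpace.exists_dense_seq {g : C(Icc (0 : ℝ) 1, ℝ) // LipschitzWith 1 g}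
  refine ⟨fun n x => (v n).1 (projIcc 0 1 zero_le_one x),
    fun n => ((v n).2.comp (LipschitzWith.projIcc zero_le_one)).weaken (by simp),
    fun f hf ε hε => ?_⟩
  have hfI : LipschitzWith 1 fun y : Icc (0 : ℝ) 1 => f y :=
    (hf.comp (LipschitzWith.subtype_val _)).weaken (by simp)
  obtain ⟨n, hn⟩ := hv.exists_dist_lt ⟨⟨_, hfI.continuous⟩, hfI⟩ hε
  refine ⟨n, fun x hx => ?_⟩
  have h := (ContinuousMap.dist_apply_le_dist ⟨x, hx⟩).trans_lt hn
  simpa [projIcc_of_mem _ hx, Real.dist_eq] using h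

variable {ρ σ : Measure ℝ} [IsProbabilityMeasure ρ] [IsProbabilityMeasure σ]

theorem W1_eq_iSup (hρ : ρ (Icc 0 1)ᶜ = 0) (hσ : σ (Icc 0 1)ᶜ = 0) {u : ℕ → ℝ → ℝ}
    (hu : ∀ n, LipschitzWith 1 (u n))
    (hdense : ∀ f : ℝ → ℝ, LipschitzWith 1 f →
      ∀ ε > 0, ∃ n, ∀ x ∈ Icc (0 : ℝ) 1, |f x - u n x| < ε) :
    W1 ρ σ = ⨆ n, (∫ x, u n x ∂ρ - ∫ x, u n x ∂σ) := by
  have hbdd : BddAbove (range fun n => ∫ x, u n x ∂ρ - ∫ x, u n x ∂σ) :=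
    ⟨2, by rintro _ ⟨n, rfl⟩; exact integral_sub_integral_le_two hρ hσ (hu n)⟩
  refine le_antisymm (csSup_le ⟨_, 0, LipschitzWith.const' 0, rfl⟩ ?_)
    (ciSup_le fun n => le_W1 hρ hσ (hu n))
  rintro _ ⟨f, hf, rfl⟩
  refine le_of_forall_pos_le_add fun ε hε => ?_
  obtain ⟨n, hn⟩ := hdense f hf (ε / 2) (half_pos hε)
  have happrox : ∀ ν : Measure ℝ, [IsProbabilityMeasure ν] → ν (Icc 0 1)ᶜ = 0 →
      |∫ x, f x ∂ν - ∫ x, u n x ∂ν| ≤ ε / 2 := fun ν _ hν =>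
    abs_integral_sub_integral_le hν (integrable_of_continuousOn hν hf.continuous.continuousOn)
      (integrable_of_continuousOn hν (hu n).continuous.continuousOn) fun x hx => (hn x hx).le
  linarith [le_ciSup hbdd n, abs_le.1 (happrox ρ hρ), abs_le.1 (happrox σ hσ)]

theorem measurable_W1 {Ω : Type*} [MeasurableSpace Ω] {Q : Ω → Measure ℝ} (hQ : Measurable Q)
    (hQprob : ∀ ω, IsProbabilityMeasure (Q ω)) (hQ01 : ∀ ω, Q ω (Icc 0 1)ᶜ = 0)
    (hσ : σ (Icc 0 1)ᶜ = 0) : Measurable fun ω => W1 (Q ω) σ := by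
  obtain ⟨u, hu, hdense⟩ := exists_seq_lipschitzWith_dense
  simp_rw [fun ω => W1_eq_iSup (hQ01 ω) hσ hu hdense]
  let κ : Kernel Ω ℝ := ⟨Q, hQ⟩
  have : IsMarkovKernel κ := ⟨hQprob⟩
  exact Measurable.iSup fun n => Measurable.sub
    ((hu n).continuous.stronglyMeasurable.integral_kernel (κ := κ)).measurable measurable_const

theorem measurable_of_measurable_toReal_apply {Ω α : Type*} [MeasurableSpace Ω] [MeasurableSpace α]
    {Q : Ω → Measure α} (hQfin : ∀ ω, IsFiniteMeasure (Q ω))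
    (h : ∀ s, MeasurableSet s → Measurable fun ω => (Q ω s).toReal) : Measurable Q :=
  Measure.measurable_of_measurable_coe _ fun s hs => by
    simpa [ENNReal.ofReal_toReal, measure_ne_top] using (h s hs).ennreal_ofReal

end Measurability

section Independence

variable {Ω : Type*} {mΩ : MeasurableSpace Ω} {P : Measure Ω}

theorem indepFun_of_measurable_natural {β : Type*} [TopologicalSpace β]
    [TopologicalSpace.MetrizableSpace β]
    [MeasurableSpace β] [BorelSpace β] {γ : Type*} [MeasurableSpace γ] {X : ℕ → Ω → β}
    (hX : ∀ i, StronglyMeasurable (X i)) (hindep : iIndepFun X P) {i j : ℕ} (hij : i < j)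
    {Y : Ω → γ} (hY : Measurable[Filtration.natural X hX i] Y) : IndepFun Y (X j) P := by
  rw [IndepFun_iff_Indep]
  have h := indep_iSup_of_disjoint (fun k => (hX k).measurable.comap_le) hindep.iIndep
    (S := Iic i) (T := {j}) (disjoint_singleton_right.2 (not_le.2 hij))
  exact indep_of_indep_of_le h hY.comap_le (le_iSup₂ (f := fun k (_ : k ∈ ({j} : Set ℕ)) =>
    MeasurableSpace.comap (X k) inferInstance) j rfl)

theorem _root_.ProbabilityTheory.IndepFun.integral_comp_eq_integral_integral [IsFiniteMeasure P]
    {α β : Type*} [MeasurableSpace α] [MeasurableSpace β] {Y : Ω → α} {Z : Ω → β}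
    (hYZ : IndepFun Y Z P) (hY : AEMeasurable Y P) (hZ : AEMeasurable Z P) {φ : α × β → ℝ}
    (hφ : Integrable φ ((P.map Y).prod (P.map Z))) :
    ∫ ω, φ (Y ω, Z ω) ∂P = ∫ ω, ∫ z, φ (Y ω, z) ∂(P.map Z) ∂P := by
  have hmap := (indepFun_iff_map_prod_eq_prod_map_map hY hZ).1 hYZ
  calc ∫ ω, φ (Y ω, Z ω) ∂P = ∫ p, φ p ∂((P.map Y).prod (P.map Z)) := by
        rw [← hmap, integral_map (hY.prodMk hZ) (hmap ▸ hφ.aestronglyMeasurable)]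
    _ = ∫ y, ∫ z, φ (y, z) ∂(P.map Z) ∂(P.map Y) := integral_prod φ hφ
    _ = ∫ ω, ∫ z, φ (Y ω, z) ∂(P.map Z) ∂P :=
        integral_map hY hφ.integral_prod_left.aestronglyMeasurable

end Independence

section Growth

variable {ν : Measure ℝ} {μ c : ℝ}

theorem measurable_expLogGrowth [SFinite ν] : Measurable (expLogGrowth ν μ) :=
  (StronglyMeasurable.integral_prod_right' (f := fun p : ℝ × ℝ => Real.log (1 + p.1 * (p.2 - μ)))
    (by fun_prop)).measurable

theorem abs_expLogGrowth_le [IsProbabilityMeasure ν] (hν : ν (Icc 0 1)ᶜ = 0) (hμ : μ ∈ Ioo 0 1)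
    (hc : c ∈ Ioo 0 1) {l : ℝ} (hl : l ∈ betInterval μ c) :
    |expLogGrowth ν μ l| ≤ lipConst μ c := by
  simpa [expLogGrowth] using
    norm_integral_le_of_norm_le_const (f := fun x => Real.log (1 + l * (x - μ)))
    ((ae_mem_Icc hν).mono fun x hx => abs_log_one_add_mul_le hμ hc hl hx)

theorem expLogGrowth_sub_le_two_mul_W1 {ρ σ : Measure ℝ} [IsProbabilityMeasure ρ]
    [IsProbabilityMeasure σ] (hρ : ρ (Icc 0 1)ᶜ = 0) (hσ : σ (Icc 0 1)ᶜ = 0)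
    (hμ : μ ∈ Ioo 0 1) (hc : c ∈ Ioo 0 1) {l l' : ℝ} (hl : l ∈ betInterval μ c)
    (hl' : l' ∈ betInterval μ c) (hmax : IsMaxOn (expLogGrowth ρ μ) (betInterval μ c) l) :
    expLogGrowth σ μ l' - expLogGrowth σ μ l ≤ 2 * lipConst μ c * W1 ρ σ := by
  have h := sub_le_two_mul_of_isMaxOn (fun k hk => abs_integral_sub_integral_le_mul_W1 hρ hσ
    (lipschitzOnWith_log_one_add_mul hμ hc hk)) hmax hl hl'
  rwa [Real.coe_toNNReal _ (lipConst_pos hμ hc).le, ← mul_assoc] at h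

end Growth

theorem integrable_log_one_add_mul {Ω : Type*} {mΩ : MeasurableSpace Ω} {P : Measure Ω}
    [IsFiniteMeasure P] {μ c : ℝ} (hμ : μ ∈ Ioo 0 1) (hc : c ∈ Ioo 0 1) {lam Y : Ω → ℝ}
    (hlam : Measurable lam) (hY : Measurable Y) (hlam_mem : ∀ ω, lam ω ∈ betInterval μ c)
    (hY01 : ∀ ω, Y ω ∈ Icc (0 : ℝ) 1) :
    Integrable (fun ω => Real.log (1 + lam ω * (Y ω - μ))) P :=
  Integrable.of_bound (Measurable.aestronglyMeasurable (by fun_prop)) _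
    (ae_of_all _ fun ω => abs_log_one_add_mul_le hμ hc (hlam_mem ω) (hY01 ω))

theorem one_step_regret_le {Ω : Type*} {mΩ : MeasurableSpace Ω} {P : Measure Ω}
    [IsProbabilityMeasure P] {Pstar : Measure ℝ} [IsProbabilityMeasure Pstar]
    (hPstar : Pstar (Icc 0 1)ᶜ = 0)
    {μ c : ℝ} (hμ : μ ∈ Ioo 0 1) (hc : c ∈ Ioo 0 1) {Y lam : Ω → ℝ} (hY : Measurable Y)
    (hlaw : P.map Y = Pstar) (hlam : Measurable lam) (hlam_mem : ∀ ω, lam ω ∈ betInterval μ c)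
    (hindep : IndepFun lam Y P) {Q : Ω → Measure ℝ} (hQ : Measurable Q)
    (hQprob : ∀ ω, IsProbabilityMeasure (Q ω)) (hQ01 : ∀ ω, Q ω (Icc 0 1)ᶜ = 0)
    (hmax : ∀ ω, IsMaxOn (expLogGrowth (Q ω) μ) (betInterval μ c) (lam ω))
    {l : ℝ} (hl : l ∈ betInterval μ c) :
    expLogGrowth Pstar μ l - ∫ ω, Real.log (1 + lam ω * (Y ω - μ)) ∂P ≤
      2 * lipConst μ c * ∫ ω, W1 (Q ω) Pstar ∂P := by
  have hφ : Integrable (fun p : ℝ × ℝ => Real.log (1 + p.1 * (p.2 - μ)))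
      ((P.map lam).prod (P.map Y)) := by
    have hsupp : ∀ᵐ p ∂((P.map lam).prod (P.map Y)), p.1 ∈ betInterval μ c ∧ p.2 ∈ Icc 0 1 :=
      (Measure.quasiMeasurePreserving_fst.ae ((ae_map_iff hlam.aemeasurable measurableSet_Icc).2
        (ae_of_all _ hlam_mem))).and
        (Measure.quasiMeasurePreserving_snd.ae (hlaw ▸ ae_mem_Icc hPstar))
    exact Integrable.of_bound (Measurable.aestronglyMeasurable (by fun_prop)) (lipConst μ c)
      (hsupp.mono fun p hp => abs_log_one_add_mul_le hμ hc hp.1 hp.2)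
  have htower :
      ∫ ω, Real.log (1 + lam ω * (Y ω - μ)) ∂P = ∫ ω, expLogGrowth Pstar μ (lam ω) ∂P := by
    rw [← hlaw]
    exact hindep.integral_comp_eq_integral_integral hlam.aemeasurable hY.aemeasurable hφ
  have hM_int : Integrable (fun ω => expLogGrowth Pstar μ (lam ω)) P :=
    Integrable.of_bound (measurable_expLogGrowth.comp hlam).aestronglyMeasurable (lipConst μ c)
      (ae_of_all _ fun ω => abs_expLogGrowth_le hPstar hμ hc (hlam_mem ω))
  have hW1_int : Integrable (fun ω => W1 (Q ω) Pstar) P :=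
    Integrable.of_bound (measurable_W1 hQ hQprob hQ01 hPstar).aestronglyMeasurable 2
      (ae_of_all _ fun ω => by
        rw [Real.norm_eq_abs, abs_of_nonneg (W1_nonneg (hQ01 ω) hPstar)]
        exact W1_le_two (hQ01 ω) hPstar)
  calc expLogGrowth Pstar μ l - ∫ ω, Real.log (1 + lam ω * (Y ω - μ)) ∂P
      = ∫ ω, (expLogGrowth Pstar μ l - expLogGrowth Pstar μ (lam ω)) ∂P := by
        rw [htower, integral_sub (integrable_const _) hM_int, integral_const, probReal_univ,
          one_smul]
    _ ≤ ∫ ω, 2 * lipConst μ c * W1 (Q ω) Pstar ∂P :=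
        integral_mono ((integrable_const _).sub hM_int) (hW1_int.const_mul _) fun ω =>
          expLogGrowth_sub_le_two_mul_W1 (hQ01 ω) hPstar hμ hc (hlam_mem ω) hl (hmax ω)
    _ = 2 * lipConst μ c * ∫ ω, W1 (Q ω) Pstar ∂P := integral_const_mul _ _

end PredictiveRegret

open PredictiveRegret

theorem predictive_assisted_regret_bound_general
    {Ω : Type*} {m0 : MeasurableSpace Ω} (P : Measure Ω) [IsProbabilityMeasure P]
    (Pstar : Measure ℝ) [IsProbabilityMeasure Pstar]
    (hPstar01 : Pstar (Set.Icc (0:ℝ) 1)ᶜ = 0)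
    (X : ℕ → Ω → ℝ) (hX_sm : ∀ i, StronglyMeasurable (X i))
    (hX01 : ∀ i ω, X i ω ∈ Set.Icc (0:ℝ) 1)
    (hindep : iIndepFun X P)
    (hlaw : ∀ i, Measure.map (X i) P = Pstar)
    (μ c : ℝ) (hμ : μ ∈ Set.Ioo (0:ℝ) 1) (hc : c ∈ Set.Ioo (0:ℝ) 1)
    (ℱ : Filtration ℕ m0) (hℱ : ℱ = Filtration.natural X hX_sm)
    (Q : ℕ → Ω → Measure ℝ)
    (hQ_prob : ∀ i ω, IsProbabilityMeasure (Q i ω))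
    (hQ01 : ∀ i ω, Q i ω (Set.Icc (0:ℝ) 1)ᶜ = 0)
    (hQ0 : ∃ ν : Measure ℝ, Q 0 = fun _ => ν)
    (hQ_pred : ∀ i, ∀ s : Set ℝ, MeasurableSet s →
      StronglyMeasurable[ℱ i] (fun ω => (Q (i + 1) ω s).toReal))
    (lam : ℕ → Ω → ℝ)
    (hlam0 : ∃ cst : ℝ, lam 0 = fun _ => cst)
    (hlam_pred : ∀ i, StronglyMeasurable[ℱ i] (lam (i + 1)))
    (hlam_mem : ∀ i ω, lam i ω ∈ Set.Icc (-c / (1 - μ)) (c / μ))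
    (hlam_opt : ∀ i ω, ∀ l ∈ Set.Icc (-c / (1 - μ)) (c / μ),
      (∫ x, Real.log (1 + l * (x - μ)) ∂(Q i ω)) ≤
        ∫ x, Real.log (1 + lam i ω * (x - μ)) ∂(Q i ω))
    (M : ℝ → ℝ) (hM : ∀ l, M l = ∫ x, Real.log (1 + l * (x - μ)) ∂Pstar)
    (lstar : ℝ) (hstar_mem : lstar ∈ Set.Icc (-c / (1 - μ)) (c / μ))
    (W : ℕ → Ω → ℝ)
    (hW : ∀ n ω, W n ω = ∏ i ∈ Finset.range n, (1 + lam i ω * (X i ω - μ))) :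
    ∀ n : ℕ, 1 ≤ n →
      M lstar - (1 / n) * ∫ ω, Real.log (W n ω) ∂P ≤
        2 * (c / ((1 - c) * min μ (1 - μ))) *
          ((1 / n) * ∑ i ∈ Finset.range n, ∫ ω, W1 (Q i ω) Pstar ∂P) := by
  intro n hn
  obtain ⟨cst, hcst⟩ := hlam0
  have hlam_meas : ∀ i, Measurable (lam i)
    | 0 => hcst ▸ measurable_const
    | i + 1 => ((hlam_pred i).mono (ℱ.le i)).measurable
  have hlam_indep : ∀ i, IndepFun (lam i) (X i) P
    | 0 => hcst ▸ indepFun_const_left _ _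
    | i + 1 => indepFun_of_measurable_natural hX_sm hindep i.lt_succ_self
        (hℱ ▸ (hlam_pred i).measurable)
  have hQ_meas : ∀ i, Measurable (Q i)
    | 0 => by obtain ⟨ν, hν⟩ := hQ0; exact hν ▸ measurable_const
    | i + 1 => measurable_of_measurable_toReal_apply (fun ω => inferInstance)
        fun s hs => ((hQ_pred i s hs).mono (ℱ.le i)).measurable
  have hfactor_pos : ∀ i ω, 0 < 1 + lam i ω * (X i ω - μ) := fun i ω => by
    linarith [neg_le_mul_sub_of_mem_betInterval hμ (hlam_mem i ω) (hX01 i ω), hc.2]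
  have hlogW : ∫ ω, Real.log (W n ω) ∂P =
      ∑ i ∈ Finset.range n, ∫ ω, Real.log (1 + lam i ω * (X i ω - μ)) ∂P := by
    simp_rw [hW, Real.log_prod fun i _ => (hfactor_pos i _).ne']
    exact integral_finsetSum _ fun i _ => integrable_log_one_add_mul hμ hc (hlam_meas i)
      (hX_sm i).measurable (hlam_mem i) (hX01 i)
  rw [hlogW, hM]
  exact sub_one_div_mul_sum_le hn fun i => one_step_regret_le hPstar01 hμ hc (hX_sm i).measurable
    (hlaw i) (hlam_meas i) (hlam_mem i) (hlam_indep i) (hQ_meas i) (hQ_prob i) (hQ01 i)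
    (hlam_opt i) hstar_mem

/-- Finite-sample regret bound for predictive-assisted test martingales: with X₀, X₁, ...
i.i.d. in [0,1] with law P*, predictable predictive distributions Q_{i|i-1} on [0,1],
predictable coefficients λᵢ chosen by maximising the predictive expected log-growth over
I_{μ,c}, λ* the maximiser of `M(λ) = E_{P*}[log(1+λ(X−μ))]` on I_{μ,c}, and
`Wₙ = ∏_{i<n}(1+λᵢ(Xᵢ−μ))`, one has
`M(λ*) − (1/n) E[log Wₙ] ≤ 2 L_{μ,c} · (1/n) ∑_{i<n} E[W₁(Q_{i|i-1}, P*)]`,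
where `L_{μ,c} = c/((1-c)·min(μ,1-μ))`. -/
theorem predictive_assisted_regret_bound
    {Ω : Type*} {m0 : MeasurableSpace Ω} (P : Measure Ω) [IsProbabilityMeasure P]
    (Pstar : Measure ℝ) [IsProbabilityMeasure Pstar]
    (hPstar01 : Pstar (Set.Icc (0:ℝ) 1)ᶜ = 0)
    (X : ℕ → Ω → ℝ) (hX_sm : ∀ i, StronglyMeasurable (X i))
    (hX01 : ∀ i ω, X i ω ∈ Set.Icc (0:ℝ) 1)
    (hindep : iIndepFun X P)
    (hlaw : ∀ i, Measure.map (X i) P = Pstar)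
    (μ c : ℝ) (hμ : μ ∈ Set.Ioo (0:ℝ) 1) (hc : c ∈ Set.Ioo (0:ℝ) 1)
    (ℱ : Filtration ℕ m0) (hℱ : ℱ = Filtration.natural X hX_sm)
    (Q : ℕ → Ω → Measure ℝ)
    (hQ_prob : ∀ i ω, IsProbabilityMeasure (Q i ω))
    (hQ01 : ∀ i ω, Q i ω (Set.Icc (0:ℝ) 1)ᶜ = 0)
    (hQ0 : ∃ ν : Measure ℝ, Q 0 = fun _ => ν)
    (hQ_pred : ∀ i, ∀ s : Set ℝ, MeasurableSet s →
      StronglyMeasurable[ℱ i] (fun ω => (Q (i + 1) ω s).toReal))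
    (lam : ℕ → Ω → ℝ)
    (hlam0 : ∃ cst : ℝ, lam 0 = fun _ => cst)
    (hlam_pred : ∀ i, StronglyMeasurable[ℱ i] (lam (i + 1)))
    (hlam_mem : ∀ i ω, lam i ω ∈ Set.Icc (-c / (1 - μ)) (c / μ))
    (hlam_opt : ∀ i ω, ∀ l ∈ Set.Icc (-c / (1 - μ)) (c / μ),
      (∫ x, Real.log (1 + l * (x - μ)) ∂(Q i ω)) ≤
        ∫ x, Real.log (1 + lam i ω * (x - μ)) ∂(Q i ω))
    (M : ℝ → ℝ) (hM : ∀ l, M l = ∫ x, Real.log (1 + l * (x - μ)) ∂Pstar)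
    (lstar : ℝ) (hstar_mem : lstar ∈ Set.Icc (-c / (1 - μ)) (c / μ))
    (hstar_max : ∀ l ∈ Set.Icc (-c / (1 - μ)) (c / μ), M l ≤ M lstar)
    (W : ℕ → Ω → ℝ)
    (hW : ∀ n ω, W n ω = ∏ i ∈ Finset.range n, (1 + lam i ω * (X i ω - μ))) :
    ∀ n : ℕ, 1 ≤ n →
      M lstar - (1 / n) * ∫ ω, Real.log (W n ω) ∂P ≤
        2 * (c / ((1 - c) * min μ (1 - μ))) *
          ((1 / n) * ∑ i ∈ Finset.range n, ∫ ω, W1 (Q i ω) Pstar ∂P) :=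
  predictive_assisted_regret_bound_general P Pstar hPstar01 X hX_sm hX01 hindep hlaw μ c hμ hc ℱ hℱ
    Q hQ_prob hQ01 hQ0 hQ_pred lam hlam0 hlam_pred hlam_mem hlam_opt M hM lstar hstar_mem W hW
end

section
/- Fix t ∈ (0,1] and n ≥ 1. Let X_1,...,X_n ∈ [0,1] with empirical mean x̄, and let w_1,...,w_n ≥ 0 with a := ∑_i w_i ∈ (0,1], p_i = w_i/a, and suppose there exists m_H ∈ [0,1] with μ = a ∑_i p_i X_i + (1-a) m_H. If |μ − x̄| ≥ t, then n log a − n KL(u‖p) ≤ −n·min{−log(1 − t/2), t²/2}, where u is the uniform vector and KL(u‖p) = (1/n)∑_i log((1/n)/p_i) scaled by n as usual. -/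
open Real

/-!
Write KL for KL(u‖p), which is nonnegative. If a ≤ 1 − t/2, the bound follows from
log a ≤ log (1 − t/2). Otherwise μ lies within 1 − a < t/2 of the p-mean S = ∑ pᵢXᵢ, so
|S − x̄| ≥ t/2; as Xᵢ ∈ [0,1], this forces ‖u − p‖₁ ≥ t, and Pinsker's inequality gives
KL ≥ t²/2 while log a ≤ 0.

Pinsker's inequality follows from the pointwise bound 3(r−1)²/(2(r+2)) ≤ r log r − r + 1 and
Sedrakyan's form of Cauchy–Schwarz with the weights 2(uᵢ + 2pᵢ)/3, which sum to 2.
-/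

theorem isMinOn_of_hasDerivAt_of_sub_mul_nonneg {f f' : ℝ → ℝ} {s : Set ℝ} {c : ℝ}
    (hs : s.OrdConnected) (hf : ∀ x ∈ s, HasDerivAt f (f' x) x)
    (hsign : ∀ x ∈ s, 0 ≤ (x - c) * f' x) (hc : c ∈ s) : IsMinOn f s c := by
  intro x hx
  have hcont : ∀ {a b}, a ∈ s → b ∈ s → ContinuousOn f (Set.Icc a b) := fun ha hb y hy =>
    (hf y (hs.out ha hb hy)).continuousAt.continuousWithinAt
  have hderiv : ∀ {a b}, a ∈ s → b ∈ s →
      ∀ y ∈ interior (Set.Icc a b), HasDerivWithinAt f (f' y) (interior (Set.Icc a b)) y :=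
    fun ha hb y hy => (hf y (hs.out ha hb (interior_subset hy))).hasDerivWithinAt
  rcases le_total c x with hcx | hxc
  · refine monotoneOn_of_hasDerivWithinAt_nonneg (convex_Icc c x) (hcont hc hx) (hderiv hc hx)
      (fun y hy => ?_) (Set.left_mem_Icc.2 hcx) (Set.right_mem_Icc.2 hcx) hcx
    rw [interior_Icc] at hy
    exact nonneg_of_mul_nonneg_right (hsign y (hs.out hc hx (Set.Ioo_subset_Icc_self hy)))
      (sub_pos.2 hy.1)
  · refine antitoneOn_of_hasDerivWithinAt_nonpos (convex_Icc x c) (hcont hx hc) (hderiv hx hc)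
      (fun y hy => ?_) (Set.left_mem_Icc.2 hxc) (Set.right_mem_Icc.2 hxc) hxc
    rw [interior_Icc] at hy
    exact nonpos_of_mul_nonneg_right (hsign y (hs.out hx hc (Set.Ioo_subset_Icc_self hy)))
      (sub_neg.2 hy.2)

theorem sub_one_mul_five_mul_add_one_div_le_log {r : ℝ} (hr : 0 < r) :
    (r - 1) * (5 * r + 1) / (2 * r * (r + 2)) ≤ log r := by
  have hderiv : ∀ x ∈ Set.Ioi (0 : ℝ), HasDerivAt
      (fun y => log y - (y - 1) * (5 * y + 1) / (2 * y * (y + 2)))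
      ((x - 1) ^ 3 / (x ^ 2 * (x + 2) ^ 2)) x := by
    intro x (hx : 0 < x)
    have h := (hasDerivAt_log hx.ne').fun_sub ((((hasDerivAt_id' x).sub_const 1).fun_mul
      (((hasDerivAt_id' x).const_mul 5).add_const 1)).fun_div
      (((hasDerivAt_id' x).const_mul 2).fun_mul ((hasDerivAt_id' x).add_const 2))
      (by positivity))
    refine h.congr_deriv ?_
    field_simp
    ring
  have hmin := isMinOn_of_hasDerivAt_of_sub_mul_nonneg Set.ordConnected_Ioi hderiv
    (fun x (hx : 0 < x) => by
      rw [← mul_div_assoc, ← pow_succ']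
      exact div_nonneg (Even.pow_nonneg (by decide) _) (by positivity))
    (Set.mem_Ioi.2 one_pos) (Set.mem_Ioi.2 hr)
  simpa using hmin

theorem three_mul_sq_div_le_mul_log_div_sub_add {u p : ℝ} (hu : 0 < u) (hp : 0 < p) :
    3 * (u - p) ^ 2 / (2 * (u + 2 * p)) ≤ u * log (u / p) - u + p := by
  have h := mul_le_mul_of_nonneg_left
    (sub_one_mul_five_mul_add_one_div_le_log (div_pos hu hp)) hu.le
  calc 3 * (u - p) ^ 2 / (2 * (u + 2 * p))
      = u * ((u / p - 1) * (5 * (u / p) + 1) / (2 * (u / p) * (u / p + 2))) - u + p := by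
        field_simp
        ring
    _ ≤ u * log (u / p) - u + p := by linarith

theorem sq_sum_abs_sub_div_two_le_sum_mul_log_div {ι : Type*} [Fintype ι] {u p : ι → ℝ}
    (hu : ∀ i, 0 < u i) (hp : ∀ i, 0 < p i) (hu1 : ∑ i, u i = 1) (hp1 : ∑ i, p i = 1) :
    (∑ i, |u i - p i|) ^ 2 / 2 ≤ ∑ i, u i * log (u i / p i) := by
  have hweights : ∑ i, 2 * (u i + 2 * p i) / 3 = 2 := by
    simp only [← Finset.sum_div, ← Finset.mul_sum, Finset.sum_add_distrib, hu1, hp1]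
    norm_num
  calc (∑ i, |u i - p i|) ^ 2 / 2
      = (∑ i, |u i - p i|) ^ 2 / ∑ i, 2 * (u i + 2 * p i) / 3 := by rw [hweights]
    _ ≤ ∑ i, |u i - p i| ^ 2 / (2 * (u i + 2 * p i) / 3) :=
        Finset.sq_sum_div_le_sum_sq_div _ _ fun i _ => by linarith [hu i, hp i]
    _ = ∑ i, 3 * (u i - p i) ^ 2 / (2 * (u i + 2 * p i)) := by
        congr! 1 with i
        rw [sq_abs]
        field_simp
    _ ≤ ∑ i, (u i * log (u i / p i) - u i + p i) :=
        Finset.sum_le_sum fun i _ => three_mul_sq_div_le_mul_log_div_sub_add (hu i) (hp i)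
    _ = ∑ i, u i * log (u i / p i) := by
        rw [Finset.sum_add_distrib, Finset.sum_sub_distrib, hu1, hp1]
        ring

theorem abs_sum_mul_sub_sum_mul_le {ι : Type*} [Fintype ι] {u p X : ι → ℝ}
    (hsum : ∑ i, p i = ∑ i, u i) (hX : ∀ i, X i ∈ Set.Icc (0 : ℝ) 1) :
    |∑ i, p i * X i - ∑ i, u i * X i| ≤ (∑ i, |u i - p i|) / 2 := by
  have hcentre : ∑ i, p i * X i - ∑ i, u i * X i = ∑ i, (p i - u i) * (X i - 1 / 2) := by
    simp only [sub_mul, mul_sub, Finset.sum_sub_distrib, ← Finset.sum_mul, hsum]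
    ring
  calc |∑ i, p i * X i - ∑ i, u i * X i|
      ≤ ∑ i, |p i - u i| * |X i - 1 / 2| := by
        rw [hcentre]
        simpa only [abs_mul] using
          Finset.abs_sum_le_sum_abs (fun i => (p i - u i) * (X i - 1 / 2)) Finset.univ
    _ ≤ ∑ i, |u i - p i| * (1 / 2) := by
        refine Finset.sum_le_sum fun i _ => ?_
        rw [abs_sub_comm]
        exact mul_le_mul_of_nonneg_left
          (abs_le.2 ⟨by linarith [(hX i).1], by linarith [(hX i).2]⟩) (abs_nonneg _)
    _ = (∑ i, |u i - p i|) / 2 := by rw [← Finset.sum_mul]; ring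

theorem abs_mul_add_one_sub_mul_sub_le {a s m : ℝ} (ha : a ≤ 1) (hs : s ∈ Set.Icc (0 : ℝ) 1)
    (hm : m ∈ Set.Icc (0 : ℝ) 1) : |a * s + (1 - a) * m - s| ≤ 1 - a := by
  rw [show a * s + (1 - a) * m - s = (1 - a) * (m - s) by ring, abs_mul,
    abs_of_nonneg (sub_nonneg.2 ha)]
  exact mul_le_of_le_one_right (sub_nonneg.2 ha)
    (abs_sub_le_of_nonneg_of_le (G := ℝ) hm.1 hm.2 hs.1 hs.2)

/-- Separation lemma for the RETEL pseudo-likelihood. If the weights p arise from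
nonnegative w with total mass a ∈ (0,1], the candidate mean μ is a mixture
`μ = a ∑ pᵢXᵢ + (1-a) m_H` with m_H ∈ [0,1], and μ is separated from the empirical mean x̄
by at least t ∈ (0,1], then
`n log a − n KL(u‖p) ≤ −n · min{−log(1 − t/2), t²/2}`,
where `KL(u‖p) = ∑ᵢ (1/n) log((1/n)/pᵢ)`.
(Strict positivity of w is assumed so that the real KL formula agrees with relative entropy;
otherwise KL = ∞ and the bound is trivial.) -/
theorem retel_separation_lemma (n : ℕ) (hn : 1 ≤ n) (t : ℝ)
    (ht : t ∈ Set.Ioc (0:ℝ) 1)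
    (X w : Fin n → ℝ)
    (hX : ∀ i, X i ∈ Set.Icc (0:ℝ) 1)
    (hw : ∀ i, 0 < w i)
    (a : ℝ) (ha_def : a = ∑ i, w i) (ha : a ∈ Set.Ioc (0:ℝ) 1)
    (p : Fin n → ℝ) (hp : ∀ i, p i = w i / a)
    (mH μ : ℝ) (hmH : mH ∈ Set.Icc (0:ℝ) 1)
    (hμ : μ = a * ∑ i, p i * X i + (1 - a) * mH)
    (hsep : |μ - (∑ i, X i) / n| ≥ t) :
    (n : ℝ) * Real.log a - n * (∑ i, (1 / n) * Real.log ((1 / n) / p i)) ≤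
      -(n : ℝ) * min (-Real.log (1 - t / 2)) (t ^ 2 / 2) := by
  obtain ⟨ha0, ha1⟩ := ha
  have hn0 : (0 : ℝ) < n := by exact_mod_cast hn
  have hp0 : ∀ i, 0 < p i := fun i => hp i ▸ div_pos (hw i) ha0
  have hp1 : ∑ i, p i = 1 := by simp_rw [hp, ← Finset.sum_div, ← ha_def, div_self ha0.ne']
  have hu1 : ∑ _i : Fin n, (1 / n : ℝ) = 1 := by simp [hn0.ne']
  have hpinsker := sq_sum_abs_sub_div_two_le_sum_mul_log_div (fun _ => by positivity) hp0 hu1 hp1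
  set KL := ∑ i, 1 / (n : ℝ) * log (1 / n / p i)
  have hKL0 : 0 ≤ KL := (by positivity : (0 : ℝ) ≤ _).trans hpinsker
  suffices log a - KL ≤ -min (-log (1 - t / 2)) (t ^ 2 / 2) by nlinarith
  rcases le_or_gt a (1 - t / 2) with hsmall | hlarge
  · linarith [log_le_log ha0 hsmall, min_le_left (-log (1 - t / 2)) (t ^ 2 / 2)]
  · set S := ∑ i, p i * X i
    have hS : S ∈ Set.Icc (0 : ℝ) 1 :=
      ⟨Finset.sum_nonneg fun i _ => mul_nonneg (hp0 i).le (hX i).1,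
        hp1 ▸ Finset.sum_le_sum fun i _ => mul_le_of_le_one_right (hp0 i).le (hX i).2⟩
    have hmix := hμ ▸ abs_mul_add_one_sub_mul_sub_le ha1 hS hmH
    have hmean : |S - (∑ i, X i) / n| ≤ (∑ i, |1 / n - p i|) / 2 := by
      rw [Finset.sum_div]
      simpa only [one_div_mul_eq_div] using
        abs_sum_mul_sub_sum_mul_le (u := fun _ => 1 / n) (hp1.trans hu1.symm) hX
    have htv : t ≤ ∑ i, |1 / n - p i| := by
      linarith [abs_sub_le μ S ((∑ i, X i) / n)]
    linarith [pow_le_pow_left₀ ht.1.le htv 2, log_nonpos ha0.le ha1,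
      min_le_right (-log (1 - t / 2)) (t ^ 2 / 2)]
end

section
/- Let ν be a probability measure on [0,1], μ ∈ (0,1), and define ψ(γ) = log ∫ exp(γ(z−μ)) dν(z). For |γ| ≤ δ, the variance of the exponentially tilted measure ν^γ (with density proportional to e^{γ(z−μ)} with respect to ν) satisfies Var_{ν^γ}(Z) ≥ e^{−4δ} Var_ν(Z); equivalently ψ''(γ) ≥ e^{−4δ} ψ''(0). -/
/-! Since `|γ (z - μ)| ≤ δ` on `[0, 1]`, the measure in question is `ν.tilted (γ (· - μ))`, whose
density `e^{γ (z - μ)} / ∫ e^{γ (z - μ)} dν` is at least `e^{-δ} / e^{δ}`. With `m` the tilted mean,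
`Var_{ν^γ} = ∫ (z - m)² dν^γ ≥ e^{-2δ} ∫ (z - m)² dν ≥ e^{-2δ} Var_ν`, the last step because the
mean minimises the mean square deviation. -/

open MeasureTheory ProbabilityTheory

section

variable {Ω : Type*} {mΩ : MeasurableSpace Ω} {μ ν : Measure Ω}

lemma variance_le_integral_sub_sq [IsProbabilityMeasure μ] {X : Ω → ℝ}
    (hX : AEStronglyMeasurable X μ) (a : ℝ) : Var[X; μ] ≤ ∫ ω, (X ω - a) ^ 2 ∂μ := by
  rw [← variance_sub_const hX a]
  exact variance_le_expectation_sq (hX.sub aestronglyMeasurable_const)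

lemma mul_variance_le_variance_of_smul_le [IsProbabilityMeasure μ] [IsFiniteMeasure ν]
    {X : Ω → ℝ} {c : ℝ} (hc : 0 ≤ c) (hμν : ENNReal.ofReal c • μ ≤ ν)
    (hXμ : AEStronglyMeasurable X μ) (hXν : MemLp X 2 ν) :
    c * Var[X; μ] ≤ Var[X; ν] := by
  set m := ν[X]
  calc c * Var[X; μ] ≤ c * ∫ ω, (X ω - m) ^ 2 ∂μ := by
        gcongr; exact variance_le_integral_sub_sq hXμ m
    _ = ∫ ω, (X ω - m) ^ 2 ∂(ENNReal.ofReal c • μ) := by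
        rw [integral_smul_measure, ENNReal.toReal_ofReal hc, smul_eq_mul]
    _ ≤ ∫ ω, (X ω - m) ^ 2 ∂ν :=
        integral_mono_measure hμν (ae_of_all _ fun _ ↦ sq_nonneg _)
          (hXν.sub (memLp_const m)).integrable_sq
    _ = Var[X; ν] := (variance_eq_integral hXν.aemeasurable).symm

variable {f : Ω → ℝ} {δ : ℝ}

lemma integrable_exp_of_abs_le [IsFiniteMeasure μ] (hf : AEMeasurable f μ)
    (hfδ : ∀ᵐ ω ∂μ, |f ω| ≤ δ) : Integrable (fun ω ↦ Real.exp (f ω)) μ := by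
  refine Integrable.of_bound hf.exp.aestronglyMeasurable (Real.exp δ) ?_
  filter_upwards [hfδ] with ω hω
  rw [Real.norm_eq_abs, Real.abs_exp]
  exact Real.exp_le_exp.2 (le_of_abs_le hω)

lemma withDensity_exp_sub_log_integral_exp_eq_tilted [NeZero μ]
    (hf : Integrable (fun ω ↦ Real.exp (f ω)) μ) :
    μ.withDensity (fun ω ↦ ENNReal.ofReal (Real.exp (f ω - Real.log (∫ ω, Real.exp (f ω) ∂μ))))
      = μ.tilted f := by
  simp_rw [Real.exp_sub, Real.exp_log (integral_exp_pos hf)]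
  rfl

lemma smul_le_tilted_of_abs_le [IsProbabilityMeasure μ] (hf : AEMeasurable f μ)
    (hfδ : ∀ᵐ ω ∂μ, |f ω| ≤ δ) : ENNReal.ofReal (Real.exp (-2 * δ)) • μ ≤ μ.tilted f := by
  have hint := integrable_exp_of_abs_le hf hfδ
  have hI : ∫ ω, Real.exp (f ω) ∂μ ≤ Real.exp δ :=
    calc ∫ ω, Real.exp (f ω) ∂μ ≤ ∫ _, Real.exp δ ∂μ := by
          refine integral_mono_ae hint (integrable_const _) ?_
          filter_upwards [hfδ] with ω hω using Real.exp_le_exp.2 (le_of_abs_le hω)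
      _ = Real.exp δ := by simp
  rw [← withDensity_const, Measure.tilted]
  refine withDensity_mono ?_
  filter_upwards [hfδ] with ω hω
  refine ENNReal.ofReal_le_ofReal ?_
  calc Real.exp (-2 * δ) = Real.exp (-δ) / Real.exp δ := by rw [← Real.exp_sub]; ring_nf
    _ ≤ Real.exp (f ω) / ∫ ω, Real.exp (f ω) ∂μ :=
        div_le_div₀ (Real.exp_pos _).le (Real.exp_le_exp.2 (neg_le_of_abs_le hω))
          (integral_exp_pos hint) hI

end

theorem tilted_variance_lower_bound_general
    (ν : Measure ℝ) [IsProbabilityMeasure ν]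
    (hν : ν (Set.Icc (0:ℝ) 1)ᶜ = 0)
    (μ : ℝ) (hμ : μ ∈ Set.Ioo (0:ℝ) 1)
    (ψ : ℝ → ℝ) (hψ : ∀ γ, ψ γ = Real.log (∫ z, Real.exp (γ * (z - μ)) ∂ν))
    (δ γ : ℝ) (hγ : |γ| ≤ δ) :
    Real.exp (-4 * δ) * variance id ν ≤
      variance id (ν.withDensity fun z => ENNReal.ofReal (Real.exp (γ * (z - μ) - ψ γ))) := by
  have hIcc : ∀ᵐ z ∂ν, z ∈ Set.Icc (0:ℝ) 1 := ae_iff.2 hν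
  have hbound : ∀ᵐ z ∂ν, |γ * (z - μ)| ≤ δ := by
    filter_upwards [hIcc] with z hz
    rw [abs_mul, ← mul_one δ]
    exact mul_le_mul hγ (abs_sub_le_of_nonneg_of_le hz.1 hz.2 hμ.1.le hμ.2.le)
      (abs_nonneg _) ((abs_nonneg γ).trans hγ)
  have hmeas : AEMeasurable (fun z ↦ γ * (z - μ)) ν := by fun_prop
  have hint := integrable_exp_of_abs_le hmeas hbound
  have : IsProbabilityMeasure (ν.tilted fun z ↦ γ * (z - μ)) := isProbabilityMeasure_tilted hint
  have hmem : MemLp id 2 (ν.tilted fun z ↦ γ * (z - μ)) := by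
    refine MemLp.of_bound aestronglyMeasurable_id 1 ?_
    filter_upwards [(tilted_absolutelyContinuous ν _).ae_le hIcc] with z hz
    exact (abs_le.2 ⟨by linarith [hz.1], hz.2⟩ : |z| ≤ 1)
  simp_rw [hψ, withDensity_exp_sub_log_integral_exp_eq_tilted hint]
  calc Real.exp (-4 * δ) * variance id ν ≤ Real.exp (-2 * δ) * variance id ν := by
        refine mul_le_mul_of_nonneg_right (Real.exp_le_exp.2 ?_) (variance_nonneg _ _)
        linarith [(abs_nonneg γ).trans hγ]
    _ ≤ _ := mul_variance_le_variance_of_smul_le (Real.exp_pos _).le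
        (smul_le_tilted_of_abs_le hmeas hbound) aestronglyMeasurable_id hmem

/-- Variance lower bound under exponential tilting: for a probability measure ν on [0,1],
μ ∈ (0,1), ψ(γ) = log ∫ e^{γ(z−μ)} dν(z), and |γ| ≤ δ, the exponentially tilted measure
ν^γ (with dν^γ/dν = e^{γ(z−μ) − ψ(γ)}) satisfies `Var_{ν^γ}(Z) ≥ e^{−4δ} Var_ν(Z)`. -/
theorem tilted_variance_lower_bound
    (ν : Measure ℝ) [IsProbabilityMeasure ν]
    (hν : ν (Set.Icc (0:ℝ) 1)ᶜ = 0)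
    (μ : ℝ) (hμ : μ ∈ Set.Ioo (0:ℝ) 1)
    (ψ : ℝ → ℝ) (hψ : ∀ γ, ψ γ = Real.log (∫ z, Real.exp (γ * (z - μ)) ∂ν))
    (δ γ : ℝ) (hδ : 0 ≤ δ) (hγ : |γ| ≤ δ) :
    Real.exp (-4 * δ) * variance id ν ≤
      variance id (ν.withDensity fun z => ENNReal.ofReal (Real.exp (γ * (z - μ) - ψ γ))) :=
  tilted_variance_lower_bound_general ν hν μ hμ ψ hψ δ γ hγ
end

section
/- Let X_1, X_2, ... be i.i.d. in [0,1] with non-degenerate law P*, fix μ ∈ (0,1) and c ∈ (0,1), and let Q_{n|n-1} be predictable distributions on [0,1] with W_1(Q_{n|n-1}, P*) → 0 in probability. Let λ_n maximise λ ↦ E_{Q_{n|n-1}}[log(1+λ(X−μ))] over I_{μ,c} = [−c/(1−μ), c/μ], and set W_n = ∏_{i=1}^n (1 + λ_i(X_i − μ)). Then (1/n) log W_n → M(λ*, μ) in probability and (1/n) E[log W_n] → M(λ*, μ), where λ* is the unique maximiser of M(λ,μ) = E_{P*}[log(1+λ(X−μ))] on I_{μ,c}. -/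
/-!
Write `log Wₙ = ∑_{i<n} log(1 + λᵢ(Xᵢ - μ))` and split each term as `Dᵢ + M(λ*) - Gᵢ` with
`Dᵢ = log(1 + λᵢ(Xᵢ - μ)) - M(λᵢ)` and `Gᵢ = M(λ*) - M(λᵢ) ≥ 0`.

Since `λᵢ` is a function of `X₀, …, X_{i-1}` and `Xᵢ ∼ P*` is independent of them, the `Dᵢ` are
bounded, centred and pairwise orthogonal, so `(1/n) ∑ Dᵢ → 0` in `L²`, hence in probability.

On `[0,1]` the integrands `x ↦ log(1 + λ(x - μ))`, `λ ∈ I_{μ,c}`, are uniformly `K`-Lipschitz, so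
Kantorovich–Rubinstein duality gives `|E_Q f - E_{P*} f| ≤ K W₁(Q, P*)` for each of them, and the
maximiser `λᵢ` of the predictive criterion satisfies `Gᵢ ≤ 2K W₁(Q_{i|i-1}, P*)`. Hence `Gᵢ → 0`
in probability; being bounded, `E Gᵢ → 0`, and Cesàro averaging with Markov's inequality gives
`(1/n) ∑ Gᵢ → 0` in mean and in probability.
-/
open MeasureTheory ProbabilityTheory Filter

open Set Topology
open scoped NNReal ENNReal

theorem abs_sum_range_div_le {a : ℕ → ℝ} {C : ℝ} (ha : ∀ i, |a i| ≤ C) (n : ℕ) :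
    |(∑ i ∈ Finset.range n, a i) / n| ≤ C := by
  rcases Nat.eq_zero_or_pos n with rfl | hn
  · simpa using (abs_nonneg (a 0)).trans (ha 0)
  have hn' : (0 : ℝ) < n := Nat.cast_pos.mpr hn
  rw [abs_div, Nat.abs_cast, div_le_iff₀ hn']
  calc |∑ i ∈ Finset.range n, a i| ≤ ∑ i ∈ Finset.range n, |a i| := Finset.abs_sum_le_sum_abs _ _
    _ ≤ ∑ _i ∈ Finset.range n, C := Finset.sum_le_sum fun i _ => ha i
    _ = C * n := by simp [mul_comm]

theorem tendsto_natCast_mul_div_natCast (a : ℝ) : Tendsto (fun n : ℕ => n * a / n) atTop (𝓝 a) :=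
  tendsto_const_nhds.congr' <| (eventually_ne_atTop 0).mono fun _ hn =>
    (mul_div_cancel_left₀ a (Nat.cast_ne_zero.mpr hn)).symm

namespace MeasureTheory

theorem abs_integral_le_of_forall_mem {α : Type*} {m : MeasurableSpace α} {ν : Measure α}
    [IsProbabilityMeasure ν] {s : Set α} {f : α → ℝ} {B : ℝ} (hν : ν sᶜ = 0)
    (hf : ∀ x ∈ s, |f x| ≤ B) : |∫ x, f x ∂ν| ≤ B := by
  have h : ∀ᵐ x ∂ν, ‖f x‖ ≤ B := by
    filter_upwards [mem_ae_iff.mpr hν] with x hx using hf x hx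
  simpa using norm_integral_le_of_norm_le_const h

section TendstoInMeasure

variable {α ι E : Type*} {m : MeasurableSpace α} {μ : Measure α} {l : Filter ι}
  [SeminormedAddCommGroup E]

theorem TendstoInMeasure.add {f g : ι → α → E} {F G : α → E} (hf : TendstoInMeasure μ f l F)
    (hg : TendstoInMeasure μ g l G) :
    TendstoInMeasure μ (fun i x => f i x + g i x) l (fun x => F x + G x) := by
  rw [tendstoInMeasure_iff_norm] at *
  intro ε hε
  have hsub : ∀ i, {x | ε ≤ ‖f i x + g i x - (F x + G x)‖} ⊆
      {x | ε / 2 ≤ ‖f i x - F x‖} ∪ {x | ε / 2 ≤ ‖g i x - G x‖} := by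
    intro i x hx
    by_contra h
    simp only [mem_union, mem_ofPred_eq, not_or, not_le, add_sub_add_comm] at h hx
    linarith [norm_add_le (f i x - F x) (g i x - G x)]
  refine tendsto_of_tendsto_of_tendsto_of_le_of_le tendsto_const_nhds
    (by simpa using (hf _ (half_pos hε)).add (hg _ (half_pos hε))) (fun i => zero_le)
    fun i => (measure_mono (hsub i)).trans (measure_union_le _ _)

theorem TendstoInMeasure.neg {f : ι → α → E} {F : α → E} (hf : TendstoInMeasure μ f l F) :
    TendstoInMeasure μ (fun i x => -f i x) l (fun x => -F x) := by
  rw [tendstoInMeasure_iff_norm] at *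
  simpa only [neg_sub_neg, norm_sub_rev] using hf

theorem TendstoInMeasure.of_norm_le_mul {E' : Type*} [SeminormedAddCommGroup E']
    {f : ι → α → E} {g : ι → α → E'} {K : ℝ≥0} (hg : TendstoInMeasure μ g l 0)
    (hfg : ∀ i x, ‖f i x‖ ≤ K * ‖g i x‖) : TendstoInMeasure μ f l 0 := by
  rw [tendstoInMeasure_iff_norm] at *
  intro ε hε
  refine tendsto_of_tendsto_of_tendsto_of_le_of_le tendsto_const_nhds
    (hg (ε / (K + 1)) (by positivity)) (fun i => zero_le) fun i => measure_mono fun x hx => ?_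
  simp only [mem_ofPred_eq, Pi.zero_apply, sub_zero] at hx ⊢
  rw [div_le_iff₀ (by positivity)]
  nlinarith [hfg i x, norm_nonneg (g i x)]

theorem tendstoInMeasure_zero_of_sq {f : ι → α → ℝ}
    (h : TendstoInMeasure μ (fun i x => f i x ^ 2) l 0) : TendstoInMeasure μ f l 0 := by
  rw [tendstoInMeasure_iff_norm] at *
  intro ε hε
  convert h (ε ^ 2) (by positivity) using 3 with i
  ext x
  simp only [mem_ofPred_eq, Pi.zero_apply, sub_zero, Real.norm_eq_abs, abs_pow, sq_abs]
  rw [← sq_abs (f i x), sq_le_sq₀ hε.le (abs_nonneg _)]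

theorem tendstoInMeasure_zero_of_tendsto_integral [IsFiniteMeasure μ] {f : ι → α → ℝ}
    (hf_nonneg : ∀ i x, 0 ≤ f i x) (hf_int : ∀ i, Integrable (f i) μ)
    (h : Tendsto (fun i => ∫ x, f i x ∂μ) l (𝓝 0)) : TendstoInMeasure μ f l 0 := by
  rw [tendstoInMeasure_iff_measureReal_norm]
  intro ε hε
  refine squeeze_zero (fun i => measureReal_nonneg) (fun i => ?_) (by simpa using h.div_const ε)
  rw [le_div_iff₀' hε]
  have hset : {x | ε ≤ ‖f i x - (0 : α → ℝ) x‖} = {x | ε ≤ f i x} := by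
    ext x
    rw [mem_ofPred_eq, mem_ofPred_eq, Pi.zero_apply, sub_zero, Real.norm_of_nonneg (hf_nonneg i x)]
  rw [hset]
  exact mul_meas_ge_le_integral_of_nonneg (ae_of_all _ (hf_nonneg i)) (hf_int i) ε

theorem tendsto_integral_of_tendstoInMeasure_of_norm_le [IsFiniteMeasure μ] {f : ℕ → α → ℝ}
    {C : ℝ} (hf : ∀ n, AEStronglyMeasurable (f n) μ) (hbdd : ∀ n x, ‖f n x‖ ≤ C)
    (h : TendstoInMeasure μ f atTop 0) : Tendsto (fun n => ∫ x, f n x ∂μ) atTop (𝓝 0) := by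
  have hui : UnifIntegrable f 1 μ := by
    refine unifIntegrable_of le_rfl ENNReal.one_ne_top hf fun ε hε => ⟨C.toNNReal + 1, fun n => ?_⟩
    have hempty : {x | C.toNNReal + 1 ≤ ‖f n x‖₊} = ∅ := by
      ext x
      simp only [mem_ofPred_eq, mem_empty_iff_false, iff_false, not_le]
      rw [← NNReal.coe_lt_coe, coe_nnnorm, NNReal.coe_add, NNReal.coe_one]
      linarith [hbdd n x, C.le_coe_toNNReal]
    simp [hempty]
  have hL1 := tendsto_Lp_finite_of_tendstoInMeasure le_rfl ENNReal.one_ne_top hf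
    (MemLp.zero) hui h
  simpa using tendsto_integral_of_L1' 0 aestronglyMeasurable_const
    (Eventually.of_forall fun n => .of_bound (hf n) C (ae_of_all _ (hbdd n))) hL1

end TendstoInMeasure

section WeakLaw

variable {α : Type*} {m : MeasurableSpace α} {μ : Measure α} [IsProbabilityMeasure μ]

theorem integral_sq_sum_le_of_orthogonal {D : ℕ → α → ℝ} {C : ℝ}
    (hD : ∀ i, AEStronglyMeasurable (D i) μ) (hbdd : ∀ i x, |D i x| ≤ C)
    (horth : ∀ i j, i < j → ∫ x, D i x * D j x ∂μ = 0) (n : ℕ) :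
    ∫ x, (∑ i ∈ Finset.range n, D i x) ^ 2 ∂μ ≤ n * C ^ 2 := by
  have hsq : ∀ i x, D i x * D i x ≤ C ^ 2 := fun i x => by
    rw [← abs_mul_abs_self, sq]
    exact mul_self_le_mul_self (abs_nonneg _) (hbdd i x)
  have hint : ∀ i j, Integrable (fun x => D i x * D j x) μ := fun i j =>
    .of_bound ((hD i).mul (hD j)) (C * C) (ae_of_all _ fun x => by
      rw [Real.norm_eq_abs, abs_mul]
      exact mul_le_mul (hbdd i x) (hbdd j x) (abs_nonneg _) ((abs_nonneg _).trans (hbdd i x)))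
  have hoff : ∀ i j, i ≠ j → ∫ x, D i x * D j x ∂μ = 0 := fun i j hij => by
    rcases hij.lt_or_gt with h | h
    · exact horth i j h
    · simpa only [mul_comm] using horth j i h
  calc ∫ x, (∑ i ∈ Finset.range n, D i x) ^ 2 ∂μ
      = ∑ i ∈ Finset.range n, ∑ j ∈ Finset.range n, ∫ x, D i x * D j x ∂μ := by
        simp_rw [sq, Finset.sum_mul_sum]
        rw [integral_finsetSum _ fun i _ => integrable_finsetSum _ fun j _ => hint i j]
        exact Finset.sum_congr rfl fun i _ => integral_finsetSum _ fun j _ => hint i j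
    _ = ∑ i ∈ Finset.range n, ∫ x, D i x * D i x ∂μ := Finset.sum_congr rfl fun i hi =>
        Finset.sum_eq_single i (fun j _ hji => hoff i j hji.symm) (absurd hi)
    _ ≤ ∑ _i ∈ Finset.range n, C ^ 2 := Finset.sum_le_sum fun i _ =>
        (integral_mono (hint i i) (integrable_const _) (hsq i)).trans_eq (by simp)
    _ = n * C ^ 2 := by simp

theorem tendstoInMeasure_sum_div_of_orthogonal {D : ℕ → α → ℝ} {C : ℝ}
    (hD : ∀ i, AEStronglyMeasurable (D i) μ) (hbdd : ∀ i x, |D i x| ≤ C)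
    (horth : ∀ i j, i < j → ∫ x, D i x * D j x ∂μ = 0) :
    TendstoInMeasure μ (fun n x => (∑ i ∈ Finset.range n, D i x) / n) atTop 0 := by
  have hmeas : ∀ n, AEStronglyMeasurable (fun x => (∑ i ∈ Finset.range n, D i x) / n) μ :=
    fun n => (Finset.aestronglyMeasurable_fun_sum _ fun i _ => hD i).mul_const (n : ℝ)⁻¹
  refine tendstoInMeasure_zero_of_sq (tendstoInMeasure_zero_of_tendsto_integral
    (fun n x => sq_nonneg _)
    (fun n => .of_bound ((hmeas n).pow 2) (C ^ 2) (ae_of_all _ fun x => ?_))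
    (squeeze_zero (fun n => integral_nonneg fun x => sq_nonneg _) (fun n => ?_)
      (tendsto_const_div_atTop_nhds_zero_nat (C ^ 2))))
  · rw [Real.norm_eq_abs, abs_pow, sq_le_sq₀ (abs_nonneg _) ((abs_nonneg _).trans (hbdd 0 x))]
    exact abs_sum_range_div_le (fun i => hbdd i x) n
  · simp_rw [div_pow]
    rw [integral_div]
    rcases Nat.eq_zero_or_pos n with rfl | hn
    · simp
    have hn' : (0 : ℝ) < n := Nat.cast_pos.mpr hn
    rw [div_le_div_iff₀ (by positivity) hn']
    nlinarith [integral_sq_sum_le_of_orthogonal hD hbdd horth n]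

end WeakLaw

section Cesaro

variable {α : Type*} {m : MeasurableSpace α} {μ : Measure α} {D G : ℕ → α → ℝ} {C : ℝ}

theorem tendsto_integral_sum_div_of_tendstoInMeasure [IsFiniteMeasure μ]
    (hG : ∀ i, AEStronglyMeasurable (G i) μ) (hbdd : ∀ i x, |G i x| ≤ C)
    (h : TendstoInMeasure μ G atTop 0) :
    Tendsto (fun n => (∫ x, ∑ i ∈ Finset.range n, G i x ∂μ) / n) atTop (𝓝 0) := by
  have hint : ∀ i, Integrable (G i) μ := fun i => .of_bound (hG i) C (ae_of_all _ (hbdd i))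
  simpa only [integral_finsetSum _ fun i _ => hint i, div_eq_inv_mul] using
    (tendsto_integral_of_tendstoInMeasure_of_norm_le hG hbdd h).cesaro

theorem tendstoInMeasure_sum_div_of_nonneg [IsFiniteMeasure μ]
    (hG : ∀ i, AEStronglyMeasurable (G i) μ)
    (hG_nonneg : ∀ i x, 0 ≤ G i x) (hbdd : ∀ i x, |G i x| ≤ C)
    (h : TendstoInMeasure μ G atTop 0) :
    TendstoInMeasure μ (fun n x => (∑ i ∈ Finset.range n, G i x) / n) atTop 0 := by
  refine tendstoInMeasure_zero_of_tendsto_integral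
    (fun n x => div_nonneg (Finset.sum_nonneg fun i _ => hG_nonneg i x) n.cast_nonneg)
    (fun n => .of_bound ((Finset.aestronglyMeasurable_fun_sum _ fun i _ => hG i).mul_const _) C
      (ae_of_all _ fun x => abs_sum_range_div_le (fun i => hbdd i x) n)) ?_
  simpa only [integral_div] using tendsto_integral_sum_div_of_tendstoInMeasure hG hbdd h

theorem tendstoInMeasure_sum_add_sub_div [IsProbabilityMeasure μ] (a : ℝ)
    (hD : ∀ i, AEStronglyMeasurable (D i) μ) (hD_bdd : ∀ i x, |D i x| ≤ C)
    (hD_orth : ∀ i j, i < j → ∫ x, D i x * D j x ∂μ = 0)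
    (hG : ∀ i, AEStronglyMeasurable (G i) μ) (hG_nonneg : ∀ i x, 0 ≤ G i x)
    (hG_bdd : ∀ i x, |G i x| ≤ C) (hG_lim : TendstoInMeasure μ G atTop 0) :
    TendstoInMeasure μ (fun n x => (∑ i ∈ Finset.range n, (D i x + a - G i x)) / n) atTop
      (fun _ => a) := by
  have hconst : TendstoInMeasure μ (fun (n : ℕ) (_ : α) => n * a / n) atTop (fun _ => a) :=
    tendstoInMeasure_of_tendsto_ae (fun _ => aestronglyMeasurable_const)
      (ae_of_all _ fun _ => tendsto_natCast_mul_div_natCast a)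
  have h := ((tendstoInMeasure_sum_div_of_orthogonal hD hD_bdd hD_orth).add hconst).add
    (tendstoInMeasure_sum_div_of_nonneg hG hG_nonneg hG_bdd hG_lim).neg
  refine (h.congr_right (ae_of_all _ fun x => by simp)).congr_left fun n => ae_of_all _ fun x => ?_
  simp only [Finset.sum_sub_distrib, Finset.sum_add_distrib, Finset.sum_const, Finset.card_range,
    nsmul_eq_mul]
  ring

theorem tendsto_integral_sum_add_sub_div [IsProbabilityMeasure μ] (a : ℝ)
    (hD : ∀ i, AEStronglyMeasurable (D i) μ) (hD_bdd : ∀ i x, |D i x| ≤ C)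
    (hD_mean : ∀ i, ∫ x, D i x ∂μ = 0)
    (hG : ∀ i, AEStronglyMeasurable (G i) μ) (hG_bdd : ∀ i x, |G i x| ≤ C)
    (hG_lim : TendstoInMeasure μ G atTop 0) :
    Tendsto (fun n => (∫ x, ∑ i ∈ Finset.range n, (D i x + a - G i x) ∂μ) / n) atTop (𝓝 a) := by
  have hDi : ∀ i, Integrable (D i) μ := fun i => .of_bound (hD i) C (ae_of_all _ (hD_bdd i))
  have hGi : ∀ i, Integrable (G i) μ := fun i => .of_bound (hG i) C (ae_of_all _ (hG_bdd i))
  have h := (tendsto_natCast_mul_div_natCast a).sub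
    (tendsto_integral_sum_div_of_tendstoInMeasure hG hG_bdd hG_lim)
  rw [sub_zero] at h
  refine h.congr fun n => ?_
  have hsum : ∫ x, ∑ i ∈ Finset.range n, (D i x + a - G i x) ∂μ
      = n * a - ∫ x, ∑ i ∈ Finset.range n, G i x ∂μ := by
    simp_rw [Finset.sum_sub_distrib, Finset.sum_add_distrib, Finset.sum_const, Finset.card_range,
      nsmul_eq_mul]
    rw [integral_sub (by fun_prop) (by fun_prop), integral_add (by fun_prop) (by fun_prop),
      integral_finsetSum _ fun i _ => hDi i]
    simp [hD_mean]
  rw [hsum, sub_div]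

end Cesaro

end MeasureTheory

section Wasserstein

variable {s : Set ℝ} {ν ν' : Measure ℝ} [IsProbabilityMeasure ν] [IsProbabilityMeasure ν']
  {f : ℝ → ℝ} {K : ℝ≥0}

theorem LipschitzWith.integrable_and_abs_integral_sub_le {R : ℝ} (hR : s ⊆ Metric.closedBall 0 R)
    (hν : ν sᶜ = 0) (hf : LipschitzWith K f) :
    Integrable f ν ∧ |∫ x, f x ∂ν - f 0| ≤ K * R := by
  have hbound : ∀ᵐ x ∂ν, ‖f x - f 0‖ ≤ K * R := by
    filter_upwards [mem_ae_iff.mpr hν] with x hx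
    rw [← dist_eq_norm]
    exact (hf.dist_le_mul x 0).trans (mul_le_mul_of_nonneg_left (hR hx) K.2)
  have hint : Integrable (fun x => f x - f 0) ν :=
    .of_bound (hf.continuous.aestronglyMeasurable.sub aestronglyMeasurable_const) _ hbound
  have hf_int : Integrable f ν :=
    (hint.add (integrable_const (f 0))).congr (ae_of_all _ fun x => sub_add_cancel (f x) (f 0))
  refine ⟨hf_int, ?_⟩
  have h := norm_integral_le_of_norm_le_const hbound
  rwa [integral_sub hf_int (integrable_const _), integral_const, probReal_univ, one_smul,
    mul_one, Real.norm_eq_abs] at h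

theorem W1_bddAbove (hs : Bornology.IsBounded s) (hν : ν sᶜ = 0) (hν' : ν' sᶜ = 0) :
    BddAbove {d : ℝ | ∃ f : ℝ → ℝ, LipschitzWith 1 f ∧ d = (∫ x, f x ∂ν) - ∫ x, f x ∂ν'} := by
  obtain ⟨R, hR⟩ := (Metric.isBounded_iff_subset_closedBall 0).mp hs
  refine ⟨2 * R, ?_⟩
  rintro _ ⟨f, hf, rfl⟩
  have h := (hf.integrable_and_abs_integral_sub_le hR hν).2
  have h' := (hf.integrable_and_abs_integral_sub_le hR hν').2
  rw [NNReal.coe_one, one_mul, abs_le] at h h'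
  linarith [h.2, h'.1]

theorem integral_sub_integral_le_mul_W1 (hs : Bornology.IsBounded s) (hν : ν sᶜ = 0)
    (hν' : ν' sᶜ = 0) (hf : LipschitzWith K f) :
    ∫ x, f x ∂ν - ∫ x, f x ∂ν' ≤ K * W1 ν ν' := by
  rcases eq_or_ne K 0 with rfl | hK
  · have hconst : ∀ x, f x = f 0 := fun x => dist_le_zero.mp (by simpa using hf.dist_le_mul x 0)
    rw [funext hconst]
    simp
  have hK' : (0 : ℝ) < K := NNReal.coe_pos.mpr (pos_iff_ne_zero.mpr hK)
  have hg : LipschitzWith 1 fun x => (K : ℝ)⁻¹ • f x := by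
    have h := (lipschitzWith_smul (K : ℝ)⁻¹).comp hf
    rwa [nnnorm_inv, NNReal.nnnorm_eq, inv_mul_cancel₀ hK] at h
  have h := le_csSup (W1_bddAbove hs hν hν') ⟨_, hg, rfl⟩
  simp only [smul_eq_mul, integral_const_mul, ← mul_sub] at h
  rwa [inv_mul_le_iff₀ hK'] at h

theorem abs_integral_sub_integral_le_mul_W1_of_lipschitzOnWith (hs : Bornology.IsBounded s)
    (hν : ν sᶜ = 0) (hν' : ν' sᶜ = 0) (hf : LipschitzOnWith K f s) :
    |∫ x, f x ∂ν - ∫ x, f x ∂ν'| ≤ K * W1 ν ν' := by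
  obtain ⟨g, hg, hfg⟩ := hf.extend_real
  have hae : ∀ ρ : Measure ℝ, ρ sᶜ = 0 → ∫ x, f x ∂ρ = ∫ x, g x ∂ρ := fun ρ hρ =>
    integral_congr_ae (eventually_of_mem (mem_ae_iff.mpr hρ) fun x hx => hfg hx)
  rw [hae ν hν, hae ν' hν', abs_le]
  constructor
  · have h := integral_sub_integral_le_mul_W1 hs hν hν' hg.neg
    simp only [Pi.neg_apply, integral_neg] at h
    linarith
  · exact integral_sub_integral_le_mul_W1 hs hν hν' hg

theorem integral_sub_integral_le_two_mul_W1 {g : ℝ → ℝ} (hs : Bornology.IsBounded s)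
    (hν : ν sᶜ = 0) (hν' : ν' sᶜ = 0) (hf : LipschitzOnWith K f s) (hg : LipschitzOnWith K g s)
    (hfg : ∫ x, f x ∂ν ≤ ∫ x, g x ∂ν) :
    ∫ x, f x ∂ν' - ∫ x, g x ∂ν' ≤ 2 * K * W1 ν ν' := by
  have hf' := abs_le.mp (abs_integral_sub_integral_le_mul_W1_of_lipschitzOnWith hs hν hν' hf)
  have hg' := abs_le.mp (abs_integral_sub_integral_le_mul_W1_of_lipschitzOnWith hs hν hν' hg)
  linarith [hf'.2, hg'.1]

end Wasserstein

section Predictable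

-- `𝒢` is declared before `m0` so that `m0` is the instance found for `Ω`.
variable {Ω E β : Type*} {𝒢 m0 : MeasurableSpace Ω} {P : Measure Ω} [IsProbabilityMeasure P]
  [MeasurableSpace E] [MeasurableSpace β] {ν : Measure E} [IsProbabilityMeasure ν]
  {X : ℕ → Ω → E} {Λ : ℕ → Ω → β} {g : β → E → ℝ}

/-- No integrability assumption is needed: if `f` is not integrable, neither is the integrand, and
both integrals vanish by convention. -/
theorem integral_sub_integral_eq_zero (f : E → ℝ) : ∫ x, (f x - ∫ y, f y ∂ν) ∂ν = 0 := by
  by_cases hf : Integrable f ν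
  · simp [integral_sub hf (integrable_const _)]
  · have h : ¬Integrable (fun x => f x - ∫ y, f y ∂ν) ν := fun h =>
      hf ((h.add (integrable_const (∫ y, f y ∂ν))).congr (ae_of_all _ fun x => sub_add_cancel _ _))
    rw [integral_undef h]

theorem integral_comp_eq_zero_of_indepFun {Z : Ω → β} {Y : Ω → E} (hZ : Measurable Z)
    (hY : Measurable Y) (hind : IndepFun Z Y P) (hlaw : P.map Y = ν) {F : β × E → ℝ}
    (hF : Measurable F) (hzero : ∀ z, ∫ x, F (z, x) ∂ν = 0) : ∫ ω, F (Z ω, Y ω) ∂P = 0 := by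
  by_cases hint : ¬Integrable (fun ω => F (Z ω, Y ω)) P
  · exact integral_undef hint
  rw [not_not] at hint
  have hZX : Measurable fun ω => (Z ω, Y ω) := hZ.prodMk hY
  have hmap : P.map (fun ω => (Z ω, Y ω)) = (P.map Z).prod ν := by
    rw [← hlaw]
    exact (indepFun_iff_map_prod_eq_prod_map_map hZ.aemeasurable hY.aemeasurable).mp hind
  have hFint : Integrable F ((P.map Z).prod ν) := by
    rw [← hmap]
    exact (integrable_map_measure hF.aestronglyMeasurable hZX.aemeasurable).mpr hint
  rw [← integral_map hZX.aemeasurable hF.aestronglyMeasurable, hmap, integral_prod F hFint]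
  simp [hzero]

theorem integral_mul_sub_integral_eq_zero_of_indep {Y : Ω → E} (hY : Measurable Y)
    (hind : Indep (MeasurableSpace.comap Y ‹_›) 𝒢 P) (hlaw : P.map Y = ν) {L : Ω → β}
    (hL : Measurable[𝒢] L) {φ : Ω → ℝ} (hφ : Measurable[𝒢] φ) (h𝒢 : 𝒢 ≤ m0)
    (hg : Measurable (Function.uncurry g)) :
    ∫ ω, φ ω * (g (L ω) (Y ω) - ∫ x, g (L ω) x ∂ν) ∂P = 0 := by
  have hZ : Measurable[𝒢] fun ω => (φ ω, L ω) := hφ.prodMk hL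
  have hmean : Measurable fun l => ∫ x, g l x ∂ν :=
    hg.stronglyMeasurable.integral_prod_right'.measurable
  refine integral_comp_eq_zero_of_indepFun (Z := fun ω => (φ ω, L ω))
    (F := fun p => p.1.1 * (g p.1.2 p.2 - ∫ x, g p.1.2 x ∂ν)) (hZ.mono h𝒢 le_rfl) hY
    (indep_of_indep_of_le_left hind.symm hZ.comap_le) hlaw ?_ fun z => ?_
  · exact measurable_fst.fst.mul ((hg.comp (measurable_fst.snd.prodMk measurable_snd)).sub
      (hmean.comp measurable_fst.snd))
  · dsimp only
    rw [integral_const_mul, integral_sub_integral_eq_zero, mul_zero]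

noncomputable def centeredIncrement (g : β → E → ℝ) (ν : Measure E) (Λ : ℕ → Ω → β)
    (X : ℕ → Ω → E) (i : ℕ) (ω : Ω) : ℝ :=
  g (Λ i ω) (X i ω) - ∫ x, g (Λ i ω) x ∂ν

theorem measurable_centeredIncrement {i : ℕ}
    (hg : Measurable (Function.uncurry g)) (hΛ : Measurable[𝒢] (Λ i))
    (hXi : Measurable[𝒢] (X i)) : Measurable[𝒢] (centeredIncrement g ν Λ X i) :=
  (hg.comp (hΛ.prodMk hXi)).sub (hg.stronglyMeasurable.integral_prod_right'.measurable.comp hΛ)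

variable [NormedAddCommGroup E] [BorelSpace E] {hX : ∀ i, StronglyMeasurable (X i)}

theorem measurable_natural_of_predictable (hΛ0 : ∃ b, Λ 0 = fun _ => b)
    (hΛ : ∀ n, Measurable[Filtration.natural X hX n] (Λ (n + 1))) {i n : ℕ} (hi : i ≤ n + 1) :
    Measurable[Filtration.natural X hX n] (Λ i) := by
  rcases i with _ | i
  · obtain ⟨b, hb⟩ := hΛ0
    rw [hb]
    exact measurable_const
  · exact (hΛ i).mono ((Filtration.natural X hX).mono (by omega)) le_rfl

theorem measurable_of_predictable (hΛ0 : ∃ b, Λ 0 = fun _ => b)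
    (hΛ : ∀ n, Measurable[Filtration.natural X hX n] (Λ (n + 1))) (i : ℕ) : Measurable (Λ i) :=
  (measurable_natural_of_predictable hΛ0 hΛ i.le_succ).mono (Filtration.le _ i) le_rfl

theorem measurable_centeredIncrement_natural (hg : Measurable (Function.uncurry g))
    (hΛ0 : ∃ b, Λ 0 = fun _ => b) (hΛ : ∀ n, Measurable[Filtration.natural X hX n] (Λ (n + 1)))
    {i n : ℕ} (hi : i ≤ n) : Measurable[Filtration.natural X hX n] (centeredIncrement g ν Λ X i) :=
  measurable_centeredIncrement hg (measurable_natural_of_predictable hΛ0 hΛ (by omega))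
    ((Filtration.stronglyAdapted_natural hX i).mono ((Filtration.natural X hX).mono hi)).measurable

theorem measurable_centeredIncrement_of_predictable (hg : Measurable (Function.uncurry g))
    (hΛ0 : ∃ b, Λ 0 = fun _ => b) (hΛ : ∀ n, Measurable[Filtration.natural X hX n] (Λ (n + 1)))
    (i : ℕ) : Measurable (centeredIncrement g ν Λ X i) :=
  (measurable_centeredIncrement_natural hg hΛ0 hΛ le_rfl).mono (Filtration.le _ i) le_rfl

theorem integral_centeredIncrement_eq_zero (hindep : iIndepFun X P)
    (hlaw : ∀ i, P.map (X i) = ν) (hg : Measurable (Function.uncurry g))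
    (hΛ0 : ∃ b, Λ 0 = fun _ => b) (hΛ : ∀ n, Measurable[Filtration.natural X hX n] (Λ (n + 1)))
    (j : ℕ) : ∫ ω, centeredIncrement g ν Λ X j ω ∂P = 0 := by
  have hXj : Measurable (X j) := (hX j).measurable
  rcases j with _ | n
  · obtain ⟨b, hb⟩ := hΛ0
    simpa [centeredIncrement] using integral_mul_sub_integral_eq_zero_of_indep (𝒢 := ⊥)
      (L := Λ 0) (φ := fun _ => 1) hXj (indep_bot_right _) (hlaw 0)
      (by rw [hb]; exact measurable_const) measurable_const bot_le hg
  · simpa [centeredIncrement] using integral_mul_sub_integral_eq_zero_of_indep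
      (φ := fun _ => 1) hXj (hindep.indep_comap_natural_of_lt hX (lt_add_one n)) (hlaw _) (hΛ n)
      measurable_const (Filtration.le _ n) hg

theorem integral_centeredIncrement_mul_eq_zero (hindep : iIndepFun X P)
    (hlaw : ∀ i, P.map (X i) = ν) (hg : Measurable (Function.uncurry g))
    (hΛ0 : ∃ b, Λ 0 = fun _ => b) (hΛ : ∀ n, Measurable[Filtration.natural X hX n] (Λ (n + 1)))
    {i j : ℕ} (hij : i < j) :
    ∫ ω, centeredIncrement g ν Λ X i ω * centeredIncrement g ν Λ X j ω ∂P = 0 := by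
  obtain ⟨n, rfl⟩ : ∃ n, j = n + 1 := ⟨j - 1, by omega⟩
  exact integral_mul_sub_integral_eq_zero_of_indep (hX (n + 1)).measurable
    (hindep.indep_comap_natural_of_lt hX (lt_add_one n)) (hlaw _) (hΛ n)
    (measurable_centeredIncrement_natural hg hΛ0 hΛ (by omega)) (Filtration.le _ n) hg

end Predictable

section Betting

variable {μ c l : ℝ}

theorem Real.lipschitzOnWith_log_Ici {a : ℝ} (ha : 0 < a) :
    LipschitzOnWith (Real.toNNReal a⁻¹) Real.log (Ici a) := by
  refine LipschitzOnWith.of_le_add_mul' _ fun x hx y hy => ?_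
  have hy0 : 0 < y := ha.trans_le hy
  have hlog := Real.log_le_sub_one_of_pos (div_pos (ha.trans_le hx) hy0)
  rw [Real.log_div (ha.trans_le hx).ne' hy0.ne'] at hlog
  have hdiv : x / y - 1 ≤ a⁻¹ * dist x y := by
    rw [div_sub_one hy0.ne', Real.dist_eq, inv_mul_eq_div]
    exact (div_le_div_of_nonneg_right (le_abs_self _) hy0.le).trans
      (div_le_div_of_nonneg_left (abs_nonneg _) ha hy)
  linarith

theorem one_sub_le_one_add_mul_sub (hμ : μ ∈ Ioo 0 1) (hl : l ∈ Icc (-c / (1 - μ)) (c / μ))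
    {x : ℝ} (hx : x ∈ Icc (0 : ℝ) 1) : 1 - c ≤ 1 + l * (x - μ) := by
  have h1 : l * μ ≤ c := (le_div_iff₀ hμ.1).mp hl.2
  have h2 : -c ≤ l * (1 - μ) := (div_le_iff₀ (sub_pos.2 hμ.2)).mp hl.1
  rcases le_total 0 l with h | h
  · nlinarith [mul_nonneg h hx.1]
  · nlinarith [mul_nonpos_of_nonpos_of_nonneg h (sub_nonneg.2 hx.2)]

theorem exists_abs_log_one_add_mul_sub_le (hμ : μ ∈ Ioo 0 1) (hc : c < 1) :
    ∃ B, ∀ l ∈ Icc (-c / (1 - μ)) (c / μ), ∀ x ∈ Icc (0 : ℝ) 1,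
      |Real.log (1 + l * (x - μ))| ≤ B := by
  have hcont : ContinuousOn (fun p : ℝ × ℝ => Real.log (1 + p.1 * (p.2 - μ)))
      (Icc (-c / (1 - μ)) (c / μ) ×ˢ Icc 0 1) :=
    ContinuousOn.log (by fun_prop) fun p hp =>
      (lt_of_lt_of_le (sub_pos.2 hc) (one_sub_le_one_add_mul_sub hμ hp.1 hp.2)).ne'
  obtain ⟨B, hB⟩ := (isCompact_Icc.prod isCompact_Icc).exists_bound_of_continuousOn hcont
  exact ⟨B, fun l hl x hx => hB (l, x) ⟨hl, hx⟩⟩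

theorem exists_lipschitzOnWith_log_one_add_mul_sub (hμ : μ ∈ Ioo 0 1) (hc : c < 1) :
    ∃ K : ℝ≥0, ∀ l ∈ Icc (-c / (1 - μ)) (c / μ),
      LipschitzOnWith K (fun x => Real.log (1 + l * (x - μ))) (Icc 0 1) := by
  refine ⟨Real.toNNReal (1 - c)⁻¹ * Real.toNNReal (max |-c / (1 - μ)| |c / μ|), fun l hl => ?_⟩
  have haffine : LipschitzWith ‖l‖₊ fun x : ℝ => 1 + l * (x - μ) :=
    LipschitzWith.of_dist_le_mul fun x y => by
      rw [Real.dist_eq, Real.dist_eq, coe_nnnorm, Real.norm_eq_abs, ← abs_mul]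
      exact le_of_eq (congrArg abs (by ring))
  refine ((Real.lipschitzOnWith_log_Ici (sub_pos.2 hc)).comp haffine.lipschitzOnWith
    fun x hx => one_sub_le_one_add_mul_sub hμ hl hx).weaken (mul_le_mul_of_nonneg_left ?_ zero_le)
  rw [← NNReal.coe_le_coe, coe_nnnorm, Real.norm_eq_abs, Real.coe_toNNReal _ (by positivity)]
  exact abs_le_max_abs_abs hl.1 hl.2

noncomputable def logGrowth (ν : Measure ℝ) (μ l : ℝ) : ℝ :=
  ∫ x, Real.log (1 + l * (x - μ)) ∂ν

theorem measurable_logGrowth (ν : Measure ℝ) [SFinite ν] (μ : ℝ) :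
    Measurable (logGrowth ν μ) := by
  have hg : Measurable fun p : ℝ × ℝ => Real.log (1 + p.1 * (p.2 - μ)) := by fun_prop
  exact hg.stronglyMeasurable.integral_prod_right'.measurable

theorem tendstoInMeasure_logGrowth_sub {Ω : Type*} {m0 : MeasurableSpace Ω} {P : Measure Ω}
    {ν : Measure ℝ} [IsProbabilityMeasure ν] (hμ : μ ∈ Ioo 0 1) (hc : c < 1)
    (hν : ν (Icc 0 1)ᶜ = 0) {Q : ℕ → Ω → Measure ℝ} (hQ_prob : ∀ i ω, IsProbabilityMeasure (Q i ω))
    (hQ01 : ∀ i ω, Q i ω (Icc 0 1)ᶜ = 0)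
    (hQ_cons : TendstoInMeasure P (fun n ω => W1 (Q n ω) ν) atTop 0) {lam : ℕ → Ω → ℝ}
    {lstar : ℝ} (hlam_mem : ∀ i ω, lam i ω ∈ Icc (-c / (1 - μ)) (c / μ))
    (hstar_mem : lstar ∈ Icc (-c / (1 - μ)) (c / μ))
    (hlam_opt : ∀ i ω, logGrowth (Q i ω) μ lstar ≤ logGrowth (Q i ω) μ (lam i ω))
    (hstar_max : ∀ l ∈ Icc (-c / (1 - μ)) (c / μ), logGrowth ν μ l ≤ logGrowth ν μ lstar) :
    TendstoInMeasure P (fun i ω => logGrowth ν μ lstar - logGrowth ν μ (lam i ω)) atTop 0 := by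
  obtain ⟨K, hK⟩ := exists_lipschitzOnWith_log_one_add_mul_sub hμ hc
  refine hQ_cons.of_norm_le_mul (K := 2 * K) fun i ω => ?_
  have := hQ_prob i ω
  rw [Real.norm_of_nonneg (sub_nonneg.2 (hstar_max _ (hlam_mem i ω))), NNReal.coe_mul,
    NNReal.coe_ofNat]
  exact (integral_sub_integral_le_two_mul_W1 (Metric.isBounded_Icc 0 1) (hQ01 i ω) hν
    (hK _ hstar_mem) (hK _ (hlam_mem i ω)) (hlam_opt i ω)).trans
    (mul_le_mul_of_nonneg_left (le_abs_self _) (by positivity))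

end Betting

theorem predictive_assisted_asymptotic_log_optimality_general
    {Ω : Type*} {m0 : MeasurableSpace Ω} (P : Measure Ω) [IsProbabilityMeasure P]
    (Pstar : Measure ℝ) [IsProbabilityMeasure Pstar]
    (hPstar01 : Pstar (Set.Icc (0:ℝ) 1)ᶜ = 0)
    (X : ℕ → Ω → ℝ) (hX_sm : ∀ i, StronglyMeasurable (X i))
    (hX01 : ∀ i ω, X i ω ∈ Set.Icc (0:ℝ) 1)
    (hindep : iIndepFun X P)
    (hlaw : ∀ i, Measure.map (X i) P = Pstar)
    (μ c : ℝ) (hμ : μ ∈ Set.Ioo (0:ℝ) 1) (hc : c ∈ Set.Ioo (0:ℝ) 1)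
    (ℱ : Filtration ℕ m0) (hℱ : ℱ = Filtration.natural X hX_sm)
    (Q : ℕ → Ω → Measure ℝ)
    (hQ_prob : ∀ i ω, IsProbabilityMeasure (Q i ω))
    (hQ01 : ∀ i ω, Q i ω (Set.Icc (0:ℝ) 1)ᶜ = 0)
    (hQ_cons : TendstoInMeasure P (fun n ω => W1 (Q n ω) Pstar) atTop 0)
    (lam : ℕ → Ω → ℝ)
    (hlam0 : ∃ cst : ℝ, lam 0 = fun _ => cst)
    (hlam_pred : ∀ i, StronglyMeasurable[ℱ i] (lam (i + 1)))
    (hlam_mem : ∀ i ω, lam i ω ∈ Set.Icc (-c / (1 - μ)) (c / μ))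
    (hlam_opt : ∀ i ω, ∀ l ∈ Set.Icc (-c / (1 - μ)) (c / μ),
      (∫ x, Real.log (1 + l * (x - μ)) ∂(Q i ω)) ≤
        ∫ x, Real.log (1 + lam i ω * (x - μ)) ∂(Q i ω))
    (M : ℝ → ℝ) (hM : ∀ l, M l = ∫ x, Real.log (1 + l * (x - μ)) ∂Pstar)
    (lstar : ℝ) (hstar_mem : lstar ∈ Set.Icc (-c / (1 - μ)) (c / μ))
    (hstar_max : ∀ l ∈ Set.Icc (-c / (1 - μ)) (c / μ), M l ≤ M lstar)
    (W : ℕ → Ω → ℝ)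
    (hW : ∀ n ω, W n ω = ∏ i ∈ Finset.range n, (1 + lam i ω * (X i ω - μ))) :
    TendstoInMeasure P (fun n ω => Real.log (W n ω) / n) atTop (fun _ => M lstar) ∧
    Tendsto (fun n : ℕ => (∫ ω, Real.log (W n ω) ∂P) / n) atTop (nhds (M lstar)) := by
  subst hℱ
  obtain rfl : M = logGrowth Pstar μ := funext hM
  obtain ⟨B, hB⟩ := exists_abs_log_one_add_mul_sub_le hμ hc.2
  have hlam_pred' := fun n => (hlam_pred n).measurable
  have hg : Measurable (Function.uncurry fun l x : ℝ => Real.log (1 + l * (x - μ))) := by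
    fun_prop
  set D := centeredIncrement (fun l x => Real.log (1 + l * (x - μ))) Pstar lam X
  set G : ℕ → Ω → ℝ := fun i ω => logGrowth Pstar μ lstar - logGrowth Pstar μ (lam i ω)
  have hgrowth_bdd : ∀ l ∈ Icc (-c / (1 - μ)) (c / μ), |logGrowth Pstar μ l| ≤ B := fun l hl =>
    abs_integral_le_of_forall_mem hPstar01 (hB l hl)
  have hD_bdd : ∀ i ω, |D i ω| ≤ 2 * B := fun i ω =>
    (abs_sub (Real.log _) (logGrowth Pstar μ (lam i ω))).trans
      (by linarith [hB _ (hlam_mem i ω) _ (hX01 i ω), hgrowth_bdd _ (hlam_mem i ω)])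
  have hG_bdd : ∀ i ω, |G i ω| ≤ 2 * B := fun i ω =>
    (abs_sub _ _).trans (by linarith [hgrowth_bdd _ hstar_mem, hgrowth_bdd _ (hlam_mem i ω)])
  have hD_meas : ∀ i, AEStronglyMeasurable (D i) P := fun i =>
    (measurable_centeredIncrement_of_predictable hg hlam0 hlam_pred' i).aestronglyMeasurable
  have hG_meas : ∀ i, AEStronglyMeasurable (G i) P := fun i =>
    (measurable_const.sub ((measurable_logGrowth Pstar μ).comp
      (measurable_of_predictable hlam0 hlam_pred' i))).aestronglyMeasurable
  have hG_nonneg : ∀ i ω, 0 ≤ G i ω := fun i ω => sub_nonneg.2 (hstar_max _ (hlam_mem i ω))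
  have hG_lim : TendstoInMeasure P G atTop 0 := tendstoInMeasure_logGrowth_sub hμ hc.2 hPstar01
    hQ_prob hQ01 hQ_cons hlam_mem hstar_mem (fun i ω => hlam_opt i ω lstar hstar_mem) hstar_max
  have hlogW : ∀ n ω,
      Real.log (W n ω) = ∑ i ∈ Finset.range n, (D i ω + logGrowth Pstar μ lstar - G i ω) := by
    intro n ω
    rw [hW, Real.log_prod fun i _ => (lt_of_lt_of_le (sub_pos.2 hc.2)
      (one_sub_le_one_add_mul_sub hμ (hlam_mem i ω) (hX01 i ω))).ne']
    refine Finset.sum_congr rfl fun i _ => ?_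
    simp only [D, G, centeredIncrement, logGrowth]
    ring
  simp_rw [hlogW]
  exact ⟨tendstoInMeasure_sum_add_sub_div _ hD_meas hD_bdd
      (fun i j => integral_centeredIncrement_mul_eq_zero hindep hlaw hg hlam0 hlam_pred')
      hG_meas hG_nonneg hG_bdd hG_lim,
    tendsto_integral_sum_add_sub_div _ hD_meas hD_bdd
      (integral_centeredIncrement_eq_zero hindep hlaw hg hlam0 hlam_pred') hG_meas hG_bdd hG_lim⟩

/-- Asymptotic log-optimality of predictive-assisted test martingales: with X₀, X₁, ...
i.i.d. in [0,1] with non-degenerate law P*, predictable predictive distributions Q_{n|n-1}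
on [0,1] satisfying `W₁(Q_{n|n-1}, P*) → 0` in probability, λₙ maximising
`λ ↦ E_{Q_{n|n-1}}[log(1+λ(X−μ))]` over I_{μ,c} = [−c/(1−μ), c/μ], and
`Wₙ = ∏_{i<n}(1+λᵢ(Xᵢ−μ))`, one has `(1/n) log Wₙ → M(λ*,μ)` in probability and
`(1/n) E[log Wₙ] → M(λ*,μ)`, where λ* is the unique maximiser of
`M(λ,μ) = E_{P*}[log(1+λ(X−μ))]` on I_{μ,c}. -/
theorem predictive_assisted_asymptotic_log_optimality
    {Ω : Type*} {m0 : MeasurableSpace Ω} (P : Measure Ω) [IsProbabilityMeasure P]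
    (Pstar : Measure ℝ) [IsProbabilityMeasure Pstar]
    (hPstar01 : Pstar (Set.Icc (0:ℝ) 1)ᶜ = 0)
    (hPstar_nondeg : ∀ x : ℝ, Pstar ≠ Measure.dirac x)
    (X : ℕ → Ω → ℝ) (hX_sm : ∀ i, StronglyMeasurable (X i))
    (hX01 : ∀ i ω, X i ω ∈ Set.Icc (0:ℝ) 1)
    (hindep : iIndepFun X P)
    (hlaw : ∀ i, Measure.map (X i) P = Pstar)
    (μ c : ℝ) (hμ : μ ∈ Set.Ioo (0:ℝ) 1) (hc : c ∈ Set.Ioo (0:ℝ) 1)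
    (ℱ : Filtration ℕ m0) (hℱ : ℱ = Filtration.natural X hX_sm)
    (Q : ℕ → Ω → Measure ℝ)
    (hQ_prob : ∀ i ω, IsProbabilityMeasure (Q i ω))
    (hQ01 : ∀ i ω, Q i ω (Set.Icc (0:ℝ) 1)ᶜ = 0)
    (hQ0 : ∃ ν : Measure ℝ, Q 0 = fun _ => ν)
    (hQ_pred : ∀ i, ∀ s : Set ℝ, MeasurableSet s →
      StronglyMeasurable[ℱ i] (fun ω => (Q (i + 1) ω s).toReal))
    (hQ_cons : TendstoInMeasure P (fun n ω => W1 (Q n ω) Pstar) atTop 0)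
    (lam : ℕ → Ω → ℝ)
    (hlam0 : ∃ cst : ℝ, lam 0 = fun _ => cst)
    (hlam_pred : ∀ i, StronglyMeasurable[ℱ i] (lam (i + 1)))
    (hlam_mem : ∀ i ω, lam i ω ∈ Set.Icc (-c / (1 - μ)) (c / μ))
    (hlam_opt : ∀ i ω, ∀ l ∈ Set.Icc (-c / (1 - μ)) (c / μ),
      (∫ x, Real.log (1 + l * (x - μ)) ∂(Q i ω)) ≤
        ∫ x, Real.log (1 + lam i ω * (x - μ)) ∂(Q i ω))
    (M : ℝ → ℝ) (hM : ∀ l, M l = ∫ x, Real.log (1 + l * (x - μ)) ∂Pstar)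
    (lstar : ℝ) (hstar_mem : lstar ∈ Set.Icc (-c / (1 - μ)) (c / μ))
    (hstar_max : ∀ l ∈ Set.Icc (-c / (1 - μ)) (c / μ), M l ≤ M lstar)
    (W : ℕ → Ω → ℝ)
    (hW : ∀ n ω, W n ω = ∏ i ∈ Finset.range n, (1 + lam i ω * (X i ω - μ))) :
    TendstoInMeasure P (fun n ω => Real.log (W n ω) / n) atTop (fun _ => M lstar) ∧
    Tendsto (fun n : ℕ => (∫ ω, Real.log (W n ω) ∂P) / n) atTop (nhds (M lstar)) :=
  predictive_assisted_asymptotic_log_optimality_general P Pstar hPstar01 X hX_sm hX01 hindep hlaw μ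
    c hμ hc ℱ hℱ Q hQ_prob hQ01 hQ_cons lam hlam0 hlam_pred hlam_mem hlam_opt M hM lstar hstar_mem
    hstar_max W hW
end
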